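/- arXiv:1911.07700 — 3 statements merged into one kernel-verified Lean document; each statement's English description precedes it below -/
import Mathlib

section
/- Let (X,S) be a minimal subshift. Then I(X,S) = ⋂_{μ∈M(X,S)} ⟨{μ([w]) : w ∈ L(X)}⟩, where ⟨N⟩ denotes the additive subgroup of ℝ generated by the family N. In particular, if (X,S) is uniquely ergodic with unique S-invariant probability measure μ, then I(X,S) = ⟨{μ([w]) : w ∈ L(X)}⟩. -/
open MeasureTheory Filter

section SadicPrelude

variable {A : Type*}

/-- The shift map on bi-infinite words. -/
def shift (x : ℤ → A) : ℤ → A := fun n => x (n + 1)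

/-- The word `w` occurs (as a factor) in the bi-infinite word `x`. -/
def OccursIn (w : List A) (x : ℤ → A) : Prop :=
  ∃ i : ℤ, ∀ k : Fin w.length, x (i + (k.1 : ℤ)) = w.get k

/-- The language of a subshift `X`. -/
def Lang (X : Set (ℤ → A)) : Set (List A) := {w | ∃ x ∈ X, OccursIn w x}

/-- Apply a morphism (substitution) to a word, by concatenation. -/
def wordApply (σ : A → List A) (w : List A) : List A := w.flatMap σ

/-- Composition of morphisms: first apply `τ`, then `σ`. -/
def morComp (σ τ : A → List A) : A → List A := fun a => wordApply σ (τ a)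

/-- A morphism is non-erasing if images of letters are nonempty. -/
def NonErasing (σ : A → List A) : Prop := ∀ a, σ a ≠ []

/-- Incidence matrix of a morphism: entry `(b,a)` is the number of occurrences of `b` in `σ a`. -/
def incMat [Fintype A] [DecidableEq A] (σ : A → List A) : Matrix A A ℤ :=
  Matrix.of fun b a => ((σ a).count b : ℤ)

/-- A morphism is unimodular if its incidence matrix has determinant ±1. -/
def IsUnimodular [Fintype A] [DecidableEq A] (σ : A → List A) : Prop :=
  (incMat σ).det = 1 ∨ (incMat σ).det = -1

/-- Left proper: all images start with the same letter. -/
def IsLeftProper (σ : A → List A) : Prop := ∃ b : A, ∀ a, (σ a).head? = some b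

/-- Right proper: all images end with the same letter. -/
def IsRightProper (σ : A → List A) : Prop := ∃ b : A, ∀ a, (σ a).getLast? = some b

/-- Proper: left and right proper. -/
def IsProper (σ : A → List A) : Prop := IsLeftProper σ ∧ IsRightProper σ

/-- `compFrom τ n m` is the composition `τ_n ∘ τ_{n+1} ∘ ⋯ ∘ τ_{n+m-1}`. -/
def compFrom (τ : ℕ → A → List A) (n : ℕ) : ℕ → A → List A
  | 0 => fun a => [a]
  | m + 1 => morComp (compFrom τ n m) (τ (n + m))

/-- `compSeq τ n` is the composition `τ_0 ∘ τ_1 ∘ ⋯ ∘ τ_{n-1}`. -/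
def compSeq (τ : ℕ → A → List A) : ℕ → A → List A := compFrom τ 0

/-- The maximal length of images of letters under `τ_0 ∘ ⋯ ∘ τ_{n-1}` tends to infinity. -/
def GrowsUnbounded [Fintype A] (τ : ℕ → A → List A) : Prop :=
  Tendsto (fun n => Finset.univ.sup fun a : A => (compSeq τ n a).length) atTop atTop

/-- A directive sequence is primitive if for all `n` there is `m > 0` such that every letter
occurs in every image of `τ_n ∘ ⋯ ∘ τ_{n+m-1}`. -/
def IsPrimitive (τ : ℕ → A → List A) : Prop :=
  ∀ n : ℕ, ∃ m : ℕ, 0 < m ∧ ∀ a b : A, b ∈ compFrom τ n m a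

/-- The language of a directive sequence: all factors of the images `τ_0 ∘ ⋯ ∘ τ_{n-1}(a)`. -/
def SadicLang (τ : ℕ → A → List A) : Set (List A) :=
  {w | ∃ (n : ℕ) (a : A), w <:+: compSeq τ n a}

/-- The S-adic subshift generated by a directive sequence. -/
def SadicShift (τ : ℕ → A → List A) : Set (ℤ → A) :=
  {x | ∀ w : List A, OccursIn w x → w ∈ SadicLang τ}

/-- The shift map restricted to an invariant set `X`. -/
def shiftOn (X : Set (ℤ → A)) (h : ∀ x ∈ X, shift x ∈ X) : X → X :=
  fun x => ⟨shift x.1, h x.1 x.2⟩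

/-- The cylinder of a letter `a` inside `X`. -/
def cylLetter (X : Set (ℤ → A)) (a : A) : Set X := {x : X | x.1 0 = a}

/-- The cylinder of a word `w` inside `X`. -/
def cylWord (X : Set (ℤ → A)) (w : List A) : Set X :=
  {x : X | ∀ k : Fin w.length, x.1 (k.1 : ℤ) = w.get k}

/-- `μ` is a `T`-invariant Borel probability measure. -/
def InvProb {Y : Type*} [MeasurableSpace Y] (T : Y → Y) (μ : Measure Y) : Prop :=
  IsProbabilityMeasure μ ∧ MeasurePreserving T μ μ

/-- A real-valued function is balanced for the dynamical system given by `T`. -/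
def IsBalanced {Y : Type*} (T : Y → Y) (f : Y → ℝ) : Prop :=
  ∃ C : ℝ, 0 < C ∧ ∀ x y : Y, ∀ n : ℕ,
    |∑ i ∈ Finset.range (n + 1), (f (T^[i] x) - f (T^[i] y))| ≤ C

end SadicPrelude
/-!
An integer-valued continuous function `f` on the compact set `X ⊆ A^ℤ` depends only on the
coordinates in some window `[-N, N]`, so `f ∘ S^N` depends only on the block `x_0 ⋯ x_{2N}`.
By invariance of `μ`, `∫ f dμ = ∫ f ∘ S^N dμ`, and the latter is an integer combination of the
measures of cylinders `[w]`, `w ∈ L(X)`. Conversely `μ([w])` is the integral of the indicator of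
the clopen set `[w]`. The equality thus holds for each invariant measure separately.
-/

open Set Function

section FiniteFibres

variable {α F : Type*} [MeasurableSpace α] [Fintype F] [MeasurableSpace F]
  [MeasurableSingletonClass F]

theorem integral_mem_closure_measureReal_fibres {μ : Measure α} [IsFiniteMeasure μ]
    {p : α → F} (hp : Measurable p) {g : α → ℤ} (hg : FactorsThrough g p) :
    ∫ x, (g x : ℝ) ∂μ ∈ AddSubgroup.closure (range fun x => μ.real (p ⁻¹' {p x})) := by
  set g' : F → ℤ := extend p g 0
  have hcomp : ∀ x, g x = g' (p x) := fun x => (hg.extend_apply 0 x).symm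
  simp_rw [hcomp]
  rw [← integral_map (f := fun u => (g' u : ℝ)) hp.aemeasurable (by fun_prop),
    integral_fintype Integrable.of_finite]
  refine AddSubgroup.sum_mem _ fun u _ => ?_
  rw [map_measureReal_apply hp (measurableSet_singleton u), smul_eq_mul, mul_comm,
    ← zsmul_eq_mul]
  by_cases hu : u ∈ range p
  · obtain ⟨x, rfl⟩ := hu
    exact AddSubgroup.zsmul_mem _ (AddSubgroup.subset_closure (mem_range_self x)) _
  · simp [preimage_singleton_eq_empty.2 hu]

end FiniteFibres

section IntegralHom

variable {Y : Type*} [TopologicalSpace Y] [CompactSpace Y] [MeasurableSpace Y]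
  [OpensMeasurableSpace Y] (μ : Measure Y) [IsFiniteMeasure μ]

theorem ContinuousMap.integrable_intCast (f : C(Y, ℤ)) : Integrable (fun y => (f y : ℝ)) μ :=
  (continuous_of_discreteTopology.comp f.continuous).integrable_of_hasCompactSupport
    (HasCompactSupport.of_compactSpace _)

noncomputable def intIntegralHom : C(Y, ℤ) →+ ℝ where
  toFun f := ∫ y, (f y : ℝ) ∂μ
  map_zero' := by simp
  map_add' f g := by
    simp only [ContinuousMap.add_apply, Int.cast_add]
    exact integral_add (f.integrable_intCast μ) (g.integrable_intCast μ)

theorem measureReal_mem_range_intIntegralHom {s : Set Y} (hs : IsClopen s) :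
    μ.real s ∈ (intIntegralHom μ).range := by
  refine ⟨(LocallyConstant.charFn ℤ hs).toContinuousMap, ?_⟩
  have : (fun y => ((s.indicator 1 y : ℤ) : ℝ)) = s.indicator 1 := by
    funext y; by_cases hy : y ∈ s <;> simp [hy]
  simp only [intIntegralHom, AddMonoidHom.coe_mk, ZeroHom.coe_mk,
    LocallyConstant.coe_continuousMap, LocallyConstant.coe_charFn, this]
  exact integral_indicator_one hs.isOpen.measurableSet

end IntegralHom

section FiniteCoordinates

variable {ι : Type*} {π : ι → Type*} [∀ i, TopologicalSpace (π i)] {X : Set (∀ i, π i)}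

theorem IsOpen.exists_finset_forall_eq_imp_mem {U : Set X} (hU : IsOpen U) {x : X} (hx : x ∈ U) :
    ∃ I : Finset ι, ∀ y : X, (∀ i ∈ I, y.1 i = x.1 i) → y ∈ U := by
  obtain ⟨V, hV, rfl⟩ := isOpen_induced_iff.1 hU
  obtain ⟨I, u, hu, hsub⟩ := isOpen_pi_iff.1 hV x.1 hx
  exact ⟨I, fun y hy => hsub fun i hi => (hy i hi).symm ▸ (hu i hi).2⟩

theorem ContinuousMap.exists_finset_forall_eq_imp_eq [∀ i, DiscreteTopology (π i)]
    [CompactSpace X] {β : Type*} [TopologicalSpace β] [DiscreteTopology β] (f : C(X, β)) :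
    ∃ I : Finset ι, ∀ x y : X, (∀ i ∈ I, x.1 i = y.1 i) → f x = f y := by
  classical
  have hloc (x : X) : ∃ I : Finset ι, ∀ y : X, (∀ i ∈ I, y.1 i = x.1 i) → f y = f x :=
    ((isOpen_discrete {f x}).preimage f.continuous).exists_finset_forall_eq_imp_mem rfl
  choose I hI using hloc
  let W (x : X) : Set X := ⋂ i ∈ I x, (fun y : X => y.1 i) ⁻¹' {x.1 i}
  have hW (x : X) : IsOpen (W x) := isOpen_biInter_finset fun i _ =>
    (isOpen_discrete _).preimage ((continuous_apply i).comp continuous_subtype_val)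
  obtain ⟨t, ht⟩ := isCompact_univ.elim_finite_subcover W hW fun x _ =>
    mem_iUnion.2 ⟨x, mem_iInter₂.2 fun _ _ => rfl⟩
  refine ⟨t.biUnion I, fun x y hxy => ?_⟩
  obtain ⟨z, hz, hxz⟩ := mem_iUnion₂.1 (ht (mem_univ x))
  have hxz : ∀ i ∈ I z, x.1 i = z.1 i := fun i hi => mem_iInter₂.1 hxz i hi
  have hyz : ∀ i ∈ I z, y.1 i = z.1 i := fun i hi =>
    (hxy i (Finset.mem_biUnion.2 ⟨z, hz, hi⟩)).symm.trans (hxz i hi)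
  rw [hI z x hxz, hI z y hyz]

end FiniteCoordinates

section Subshift

variable {A : Type*} {X : Set (ℤ → A)}

def block (L : ℕ) (x : ℤ → A) : Fin L → A := fun k => x k

theorem preimage_block_eq_cylWord (L : ℕ) (u : Fin L → A) :
    (fun x : X => block L x.1) ⁻¹' {u} = cylWord X (List.ofFn u) := by
  ext x
  simp only [mem_preimage, mem_singleton_iff, cylWord, mem_ofPred_eq, funext_iff, block,
    List.get_ofFn]
  exact ⟨fun h k => h (Fin.cast (by simp) k), fun h k => h (Fin.cast (by simp) k)⟩

theorem ofFn_block_mem_lang {x : ℤ → A} (hx : x ∈ X) (L : ℕ) : List.ofFn (block L x) ∈ Lang X :=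
  ⟨x, hx, 0, fun k => by simp [block]⟩

theorem measurable_block [MeasurableSpace A] (L : ℕ) : Measurable (block (A := A) L) := by
  unfold block; fun_prop

theorem shiftOn_iterate_apply (hS : ∀ x ∈ X, shift x ∈ X) (N : ℕ) (x : X) (i : ℤ) :
    ((shiftOn X hS)^[N] x).1 i = x.1 (i + N) := by
  induction N generalizing i with
  | zero => simp
  | succ n ih =>
    rw [Function.iterate_succ_apply', show ((shiftOn X hS) ((shiftOn X hS)^[n] x)).1 i
      = ((shiftOn X hS)^[n] x).1 (i + 1) from rfl, ih]
    push_cast; ring_nf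

theorem isClopen_cylWord [TopologicalSpace A] [DiscreteTopology A] (w : List A) :
    IsClopen (cylWord X w) := by
  have : cylWord X w = ⋂ k : Fin w.length, (fun x : X => x.1 k) ⁻¹' {w.get k} := by
    ext; simp [cylWord]
  rw [this]
  exact isClopen_iInter_of_finite fun k => (isClopen_discrete _).preimage
    ((continuous_apply _).comp continuous_subtype_val)

variable [TopologicalSpace A] [DiscreteTopology A] [CompactSpace X] (hS : ∀ x ∈ X, shift x ∈ X)

theorem exists_factorsThrough_block (f : C(X, ℤ)) :
    ∃ N : ℕ, FactorsThrough (f ∘ (shiftOn X hS)^[N]) fun x => block (2 * N + 1) x.1 := by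
  obtain ⟨I, hI⟩ := f.exists_finset_forall_eq_imp_eq
  obtain ⟨N, hN⟩ : ∃ N : ℕ, ∀ i ∈ I, |i| ≤ N := ⟨I.sup Int.natAbs, fun i hi => by
    rw [Int.abs_eq_natAbs]; exact_mod_cast Finset.le_sup (f := Int.natAbs) hi⟩
  refine ⟨N, fun x y hxy => hI _ _ fun i hi => ?_⟩
  obtain ⟨hlo, hhi⟩ := abs_le.1 (hN i hi)
  have := congr_fun hxy ⟨(i + N).toNat, by omega⟩
  simp only [block, Int.toNat_of_nonneg (by omega : 0 ≤ i + N)] at this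
  rwa [shiftOn_iterate_apply, shiftOn_iterate_apply]

variable [Fintype A] [MeasurableSpace A] [MeasurableSingletonClass A]

theorem integral_mem_closure_measureReal_cylWord {μ : Measure X} [IsFiniteMeasure μ]
    (hμ : MeasurePreserving (shiftOn X hS) μ μ) (f : C(X, ℤ)) :
    ∫ x, (f x : ℝ) ∂μ ∈ AddSubgroup.closure {α | ∃ w ∈ Lang X, μ.real (cylWord X w) = α} := by
  obtain ⟨N, hN⟩ := exists_factorsThrough_block hS f
  have hinv : ∫ x, (f x : ℝ) ∂μ = ∫ x, (f ((shiftOn X hS)^[N] x) : ℝ) ∂μ := by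
    rw [← integral_map (f := fun x => (f x : ℝ)) (hμ.iterate N).measurable.aemeasurable
      (by fun_prop), (hμ.iterate N).map_eq]
  rw [hinv]
  refine AddSubgroup.closure_mono ?_
    (integral_mem_closure_measureReal_fibres (p := fun x : X => block (2 * N + 1) x.1)
      ((measurable_block _).comp measurable_subtype_coe) hN)
  rintro _ ⟨x, rfl⟩
  exact ⟨_, ofFn_block_mem_lang x.2 _, by dsimp only; rw [preimage_block_eq_cylWord]⟩

theorem setOf_integral_eq_closure_measureReal_cylWord {μ : Measure X} [IsFiniteMeasure μ]
    (hμ : MeasurePreserving (shiftOn X hS) μ μ) :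
    {α | ∃ f : C(X, ℤ), α = ∫ x, (f x : ℝ) ∂μ} =
      AddSubgroup.closure {α | ∃ w ∈ Lang X, μ.real (cylWord X w) = α} := by
  have hrange : {α | ∃ f : C(X, ℤ), α = ∫ x, (f x : ℝ) ∂μ} = (intIntegralHom μ).range := by
    ext; simp [intIntegralHom, eq_comm]
  rw [hrange]
  refine congrArg _ (le_antisymm ?_ ((AddSubgroup.closure_le _).2 ?_))
  · rintro _ ⟨f, rfl⟩
    exact integral_mem_closure_measureReal_cylWord hS hμ f
  · rintro _ ⟨w, -, rfl⟩
    exact measureReal_mem_range_intIntegralHom μ (isClopen_cylWord w)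

end Subshift

theorem stmt1_general {A : Type*} [Fintype A] [TopologicalSpace A] [DiscreteTopology A]
    [MeasurableSpace A] [MeasurableSingletonClass A]
    (X : Set (ℤ → A)) (hclosed : IsClosed X)
    (hS : ∀ x ∈ X, shift x ∈ X) :
    ((⋂ μ ∈ {μ : Measure ↥X | InvProb (shiftOn X hS) μ},
        {α : ℝ | ∃ f : C(↥X, ℤ), α = ∫ x, (f x : ℝ) ∂μ}) =
      ⋂ μ ∈ {μ : Measure ↥X | InvProb (shiftOn X hS) μ},
        ((AddSubgroup.closure
          {α : ℝ | ∃ w ∈ Lang X, (μ (cylWord X w)).toReal = α} : AddSubgroup ℝ) : Set ℝ))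
    ∧ ∀ μ : Measure ↥X, InvProb (shiftOn X hS) μ →
        (∀ ν : Measure ↥X, InvProb (shiftOn X hS) ν → ν = μ) →
        (⋂ μ' ∈ {μ' : Measure ↥X | InvProb (shiftOn X hS) μ'},
          {α : ℝ | ∃ f : C(↥X, ℤ), α = ∫ x, (f x : ℝ) ∂μ'}) =
        ((AddSubgroup.closure
          {α : ℝ | ∃ w ∈ Lang X, (μ (cylWord X w)).toReal = α} : AddSubgroup ℝ) : Set ℝ) := by
  have : CompactSpace X := isCompact_iff_compactSpace.1 hclosed.isCompact
  have hmeasurewise : ∀ μ ∈ {μ : Measure X | InvProb (shiftOn X hS) μ},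
      {α : ℝ | ∃ f : C(↥X, ℤ), α = ∫ x, (f x : ℝ) ∂μ} =
        AddSubgroup.closure {α : ℝ | ∃ w ∈ Lang X, (μ (cylWord X w)).toReal = α} := by
    rintro μ ⟨_, hinv⟩
    exact setOf_integral_eq_closure_measureReal_cylWord hS hinv
  refine ⟨iInter₂_congr hmeasurewise, fun μ hμ huniq => ?_⟩
  have hsingleton : {ν : Measure X | InvProb (shiftOn X hS) ν} = {μ} :=
    eq_singleton_iff_unique_mem.2 ⟨hμ, huniq⟩
  rw [hsingleton, biInter_singleton, hmeasurewise μ hμ]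

theorem stmt1 {A : Type*} [Fintype A] [DecidableEq A] [TopologicalSpace A] [DiscreteTopology A]
    [MeasurableSpace A] [MeasurableSingletonClass A] (hcard : 2 ≤ Fintype.card A)
    (X : Set (ℤ → A)) (hclosed : IsClosed X) (hnonempty : X.Nonempty)
    (hS : ∀ x ∈ X, shift x ∈ X)
    (hmin : ∀ F : Set (ℤ → A), F ⊆ X → IsClosed F → (∀ x ∈ F, shift x ∈ F) →
      F = ∅ ∨ F = X) :
    ((⋂ μ ∈ {μ : Measure ↥X | InvProb (shiftOn X hS) μ},
        {α : ℝ | ∃ f : C(↥X, ℤ), α = ∫ x, (f x : ℝ) ∂μ}) =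
      ⋂ μ ∈ {μ : Measure ↥X | InvProb (shiftOn X hS) μ},
        ((AddSubgroup.closure
          {α : ℝ | ∃ w ∈ Lang X, (μ (cylWord X w)).toReal = α} : AddSubgroup ℝ) : Set ℝ))
    ∧ ∀ μ : Measure ↥X, InvProb (shiftOn X hS) μ →
        (∀ ν : Measure ↥X, InvProb (shiftOn X hS) ν → ν = μ) →
        (⋂ μ' ∈ {μ' : Measure ↥X | InvProb (shiftOn X hS) μ'},
          {α : ℝ | ∃ f : C(↥X, ℤ), α = ∫ x, (f x : ℝ) ∂μ'}) =
        ((AddSubgroup.closure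
          {α : ℝ | ∃ w ∈ Lang X, (μ (cylWord X w)).toReal = α} : AddSubgroup ℝ) : Set ℝ) :=
  stmt1_general X hclosed hS
end

section
/- Let (X,S) be an S-adic subshift generated by a primitive, unimodular and left proper directive sequence τ = (τ_n)_{n≥1} of non-erasing morphisms A* → A*. For a left proper morphism σ whose images all start with the letter b, let σ̄ be the (right proper) morphism defined by b·σ̄(a) = σ(a)·b for all a ∈ A. Then the directive sequence τ̃ = (τ̃_n)_{n≥1} defined by τ̃_n = τ_{2n−1} ∘ τ̄_{2n} is primitive, unimodular and proper, and X_{τ̃} = X (so (X,S) is also generated by τ̃). -/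
open MeasureTheory Filter

/-- The right proper morphism associated with a left proper morphism `σ` all of whose images
start with the letter `b`: it satisfies `b · σ̄(a) = σ(a) · b` for every letter `a`. -/
def barMor {A : Type*} (σ : A → List A) : A → List A :=
  fun a => (σ a).tail ++ (σ a).take 1

/-- The properized directive sequence: `τ̃_n = τ_{2n} ∘ (τ_{2n+1})̄`. -/
def tildeSeq {A : Type*} (τ : ℕ → A → List A) : ℕ → A → List A :=
  fun n => morComp (τ (2 * n)) (barMor (τ (2 * n + 1)))


section Aux

variable {A : Type*}

lemma wordApply_nil (σ : A → List A) : wordApply σ [] = [] := rfl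

lemma wordApply_cons (σ : A → List A) (a : A) (w : List A) :
    wordApply σ (a :: w) = σ a ++ wordApply σ w := List.flatMap_cons ..

lemma wordApply_append (σ : A → List A) (u v : List A) :
    wordApply σ (u ++ v) = wordApply σ u ++ wordApply σ v := List.flatMap_append ..

lemma wordApply_singleton (σ : A → List A) (a : A) : wordApply σ [a] = σ a := by
  simp [wordApply]

lemma wordApply_assoc (σ ρ : A → List A) (w : List A) :
    wordApply σ (wordApply ρ w) = wordApply (morComp σ ρ) w := by
  induction w with
  | nil => rfl
  | cons a w ih =>
    rw [wordApply_cons, wordApply_cons, wordApply_append, ih]; rfl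

lemma wordApply_ne_nil {σ : A → List A} (hσ : NonErasing σ) {w : List A} (hw : w ≠ []) :
    wordApply σ w ≠ [] := by
  cases w with
  | nil => exact absurd rfl hw
  | cons a w => rw [wordApply_cons]; simp [hσ a]

lemma length_le_length_wordApply {σ : A → List A} (hσ : NonErasing σ) (w : List A) :
    w.length ≤ (wordApply σ w).length := by
  induction w with
  | nil => simp [wordApply_nil]
  | cons a w ih =>
    rw [wordApply_cons]
    simp only [List.length_cons, List.length_append]
    have : 1 ≤ (σ a).length := List.length_pos_iff.mpr (hσ a)
    omega

lemma nonErasing_morComp {σ ρ : A → List A} (hσ : NonErasing σ) (hρ : NonErasing ρ) :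
    NonErasing (morComp σ ρ) := fun a => wordApply_ne_nil hσ (hρ a)

lemma nonErasing_barMor {σ : A → List A} (hσ : NonErasing σ) : NonErasing (barMor σ) := by
  intro a
  unfold barMor
  have := hσ a
  cases h : σ a with
  | nil => exact absurd h this
  | cons c t => simp [h]

lemma nonErasing_tildeSeq {τ : ℕ → A → List A} (hner : ∀ n, NonErasing (τ n)) :
    ∀ n, NonErasing (tildeSeq τ n) := fun n =>
  nonErasing_morComp (hner (2 * n)) (nonErasing_barMor (hner (2 * n + 1)))

lemma nonErasing_compFrom {τ : ℕ → A → List A} (hner : ∀ n, NonErasing (τ n)) (n m : ℕ) :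
    NonErasing (compFrom τ n m) := by
  induction m with
  | zero => intro a; simp [compFrom]
  | succ m ih => exact nonErasing_morComp ih (hner (n + m))

lemma compFrom_add (τ : ℕ → A → List A) (n m₁ m₂ : ℕ) (a : A) :
    compFrom τ n (m₁ + m₂) a = wordApply (compFrom τ n m₁) (compFrom τ (n + m₁) m₂ a) := by
  induction m₂ generalizing a with
  | zero => simp [compFrom, wordApply_singleton]
  | succ m₂ ih =>
    show wordApply (compFrom τ n (m₁ + m₂)) (τ (n + (m₁ + m₂)) a) = _
    have h1 : compFrom τ (n + m₁) (m₂ + 1) a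
        = wordApply (compFrom τ (n + m₁) m₂) (τ (n + m₁ + m₂) a) := rfl
    rw [h1, wordApply_assoc]
    have hfe : (fun c => compFrom τ n (m₁ + m₂) c)
        = morComp (compFrom τ n m₁) (compFrom τ (n + m₁) m₂) := by
      funext c
      rw [ih c]; rfl
    rw [show n + (m₁ + m₂) = n + m₁ + m₂ by omega]
    exact congrArg (fun f => wordApply f (τ (n + m₁ + m₂) a)) hfe

lemma count_wordApply [DecidableEq A] [Fintype A] (σ : A → List A) (w : List A) (b : A) :
    (wordApply σ w).count b = ∑ c : A, (w.count c) * ((σ c).count b) := by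
  induction w with
  | nil => simp [wordApply_nil]
  | cons a w ih =>
    rw [wordApply_cons, List.count_append, ih]
    have : ∀ c : A, ((a :: w).count c) * ((σ c).count b)
        = (if c = a then (σ a).count b else 0) + (w.count c) * ((σ c).count b) := by
      intro c
      rw [List.count_cons]
      rcases eq_or_ne c a with h | h
      · subst h; simp [Nat.add_mul, Nat.add_comm]
      · simp [h, Ne.symm h]
    rw [Finset.sum_congr rfl (fun c _ => this c), Finset.sum_add_distrib]
    simp [Nat.add_comm]

lemma incMat_morComp [DecidableEq A] [Fintype A] (σ ρ : A → List A) :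
    incMat (morComp σ ρ) = incMat σ * incMat ρ := by
  ext b a
  simp only [incMat, Matrix.of_apply, Matrix.mul_apply, morComp]
  rw [count_wordApply]
  push_cast
  rw [Finset.sum_congr rfl (fun c _ => by ring : ∀ c ∈ Finset.univ,
    ((ρ a).count c : ℤ) * ((σ c).count b : ℤ) = ((σ c).count b : ℤ) * ((ρ a).count c : ℤ))]

lemma count_barMor [DecidableEq A] (σ : A → List A) (a b : A) :
    ((barMor σ) a).count b = ((σ a).count b) := by
  unfold barMor
  rw [List.count_append]
  conv_rhs => rw [← List.take_append_drop 1 (σ a)]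
  rw [List.count_append, List.drop_one]
  omega

lemma incMat_barMor [DecidableEq A] [Fintype A] (σ : A → List A) :
    incMat (barMor σ) = incMat σ := by
  ext b a
  simp [incMat, count_barMor]

/-- The key conjugation lemma: `compFrom (tildeSeq τ) n m` is conjugate to
`compFrom τ (2n) (2m)` by a word `p`. -/
lemma conj {τ : ℕ → A → List A} (hner : ∀ k, NonErasing (τ k))
    (hlp : ∀ k, IsLeftProper (τ k)) (n m : ℕ) :
    ∃ p : List A, ∀ w : List A,
      p ++ wordApply (compFrom (tildeSeq τ) n m) w = wordApply (compFrom τ (2 * n) (2 * m)) w ++ p := by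
  induction m with
  | zero =>
    refine ⟨[], fun w => ?_⟩
    simp [compFrom]
  | succ m ih =>
    obtain ⟨p, hp⟩ := ih
    set X := compFrom (tildeSeq τ) n m with hX
    set Y := compFrom τ (2 * n) (2 * m) with hY
    obtain ⟨b, hb⟩ := hlp (2 * n + 2 * m + 1)
    set σ := τ (2 * n + 2 * m) with hσ
    set ρ := τ (2 * n + 2 * m + 1) with hρ
    refine ⟨wordApply Y (σ b) ++ p, fun w => ?_⟩
    -- first establish the letter version for the new composition
    have key : ∀ a : A, (wordApply Y (σ b) ++ p) ++ compFrom (tildeSeq τ) n (m + 1) a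
        = compFrom τ (2 * n) (2 * (m + 1)) a ++ (wordApply Y (σ b) ++ p) := by
      intro a
      have hXa : compFrom (tildeSeq τ) n (m + 1) a
          = wordApply X (wordApply σ (barMor ρ a)) := by
        show wordApply X (tildeSeq τ (n + m) a) = _
        have : tildeSeq τ (n + m) a = wordApply (τ (2 * (n + m))) (barMor (τ (2 * (n + m) + 1)) a) := rfl
        rw [this, show 2 * (n + m) = 2 * n + 2 * m by omega]
      have hYa : compFrom τ (2 * n) (2 * (m + 1)) a
          = wordApply Y (wordApply σ (ρ a)) := by
        have e1 : compFrom τ (2 * n) (2 * (m + 1)) a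
            = wordApply (compFrom τ (2 * n) (2 * m + 1)) (τ (2 * n + (2 * m + 1)) a) := by
          show compFrom τ (2 * n) (2 * m + 1 + 1) a = _
          rfl
        have e2 : (fun c => compFrom τ (2 * n) (2 * m + 1) c)
            = fun c => wordApply Y (σ c) := by
          funext c
          show wordApply Y (τ (2 * n + 2 * m) c) = _
          rfl
        rw [e1, show 2 * n + (2 * m + 1) = 2 * n + 2 * m + 1 by omega, ← hρ]
        rw [show (compFrom τ (2 * n) (2 * m + 1)) = fun c => wordApply Y (σ c) from e2]
        rw [show (fun c => wordApply Y (σ c)) = morComp Y σ from rfl, ← wordApply_assoc]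
      have hρa : ρ a = b :: (ρ a).tail := by
        have := hb a
        cases h : ρ a with
        | nil => rw [h] at this; simp at this
        | cons c t =>
          rw [h] at this
          simp only [List.head?_cons, Option.some.injEq] at this
          simp [this]
      have htake : (ρ a).take 1 = [b] := by rw [hρa]; rfl
      have hbar : barMor ρ a = (ρ a).tail ++ [b] := by
        unfold barMor; rw [htake]
      rw [hXa, hYa, hbar]
      rw [wordApply_append, wordApply_singleton, wordApply_append]
      conv_rhs => rw [hρa, wordApply_cons, wordApply_append]
      set t := wordApply σ (ρ a).tail
      -- goal: (Yσb ++ p) ++ (X t ++ X σb) = (Y σb ++ Y t) ++ (Yσb ++ p)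
      have h1 : p ++ wordApply X t = wordApply Y t ++ p := hp t
      have h2 : p ++ wordApply X (σ b) = wordApply Y (σ b) ++ p := hp (σ b)
      calc (wordApply Y (σ b) ++ p) ++ (wordApply X t ++ wordApply X (σ b))
          = wordApply Y (σ b) ++ ((p ++ wordApply X t) ++ wordApply X (σ b)) := by
            simp [List.append_assoc]
        _ = wordApply Y (σ b) ++ (wordApply Y t ++ (p ++ wordApply X (σ b))) := by
            rw [h1]; simp [List.append_assoc]
        _ = wordApply Y (σ b) ++ (wordApply Y t ++ (wordApply Y (σ b) ++ p)) := by rw [h2]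
        _ = (wordApply Y (σ b) ++ wordApply Y t) ++ (wordApply Y (σ b) ++ p) := by
            simp [List.append_assoc]
    -- now the word version by induction on w
    induction w with
    | nil => simp [wordApply_nil]
    | cons a w ihw =>
      rw [wordApply_cons, wordApply_cons]
      calc (wordApply Y (σ b) ++ p) ++ (compFrom (tildeSeq τ) n (m + 1) a
              ++ wordApply (compFrom (tildeSeq τ) n (m + 1)) w)
          = ((wordApply Y (σ b) ++ p) ++ compFrom (tildeSeq τ) n (m + 1) a)
              ++ wordApply (compFrom (tildeSeq τ) n (m + 1)) w := by
            simp [List.append_assoc]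
        _ = (compFrom τ (2 * n) (2 * (m + 1)) a ++ (wordApply Y (σ b) ++ p))
              ++ wordApply (compFrom (tildeSeq τ) n (m + 1)) w := by rw [key a]
        _ = compFrom τ (2 * n) (2 * (m + 1)) a ++ ((wordApply Y (σ b) ++ p)
              ++ wordApply (compFrom (tildeSeq τ) n (m + 1)) w) := by
            simp [List.append_assoc]
        _ = _ := by rw [ihw]; simp [List.append_assoc]

lemma count_conj [DecidableEq A] {τ : ℕ → A → List A} (hner : ∀ k, NonErasing (τ k))
    (hlp : ∀ k, IsLeftProper (τ k)) (n m : ℕ) (a c : A) :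
    (compFrom (tildeSeq τ) n m a).count c = (compFrom τ (2 * n) (2 * m) a).count c := by
  obtain ⟨p, hp⟩ := conj hner hlp n m
  have := hp [a]
  rw [wordApply_singleton, wordApply_singleton] at this
  have h2 := congrArg (fun l => l.count c) this
  simp only [List.count_append] at h2
  omega

lemma count_wordApply_ge [DecidableEq A] {v : A → List A} {a : A} (hv : ∀ d, a ∈ v d)
    (w : List A) : w.length ≤ (wordApply v w).count a := by
  induction w with
  | nil => simp [wordApply_nil]
  | cons d w ih =>
    rw [wordApply_cons, List.count_append]
    have : 1 ≤ (v d).count a := List.one_le_count_iff.mpr (hv d)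
    simp only [List.length_cons]
    omega

lemma length_wordApply_ge_of_mem [DecidableEq A] {v : A → List A} (hv : NonErasing v)
    {w : List A} {L : ℕ} (hL : ∀ d, L ≤ (v d).length) (hw : 2 ≤ w.length) :
    2 * L ≤ (wordApply v w).length := by
  match w with
  | d₁ :: d₂ :: w =>
    rw [wordApply_cons, wordApply_cons]
    simp only [List.length_append]
    have := hL d₁
    have := hL d₂
    omega

lemma two_le_length_of_all_mem {w : List A} [Fintype A] (hcard : 2 ≤ Fintype.card A)
    (hw : ∀ b : A, b ∈ w) : 2 ≤ w.length := by
  obtain ⟨a, b, hab⟩ := Fintype.exists_pair_of_one_lt_card (α := A) (by omega)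
  match w with
  | [] => exact absurd (hw a) (by simp)
  | [c] =>
    have ha := hw a
    have hb := hw b
    simp at ha hb
    exact absurd (ha.trans hb.symm) hab
  | c :: d :: w => simp

/-- Minimum length of images grows without bound, from primitivity. -/
lemma minLen [Fintype A] [DecidableEq A] {τ : ℕ → A → List A} (hcard : 2 ≤ Fintype.card A)
    (hner : ∀ k, NonErasing (τ k)) (hprim : IsPrimitive τ) (n L : ℕ) :
    ∃ m : ℕ, ∀ c, L ≤ (compFrom τ n m c).length := by
  induction L with
  | zero => exact ⟨0, fun c => Nat.zero_le _⟩
  | succ L ih =>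
    obtain ⟨m, hm⟩ := ih
    obtain ⟨m₂, hm₂pos, hm₂⟩ := hprim (n + m)
    refine ⟨m + m₂, fun c => ?_⟩
    rw [compFrom_add]
    have h2 : 2 ≤ (compFrom τ (n + m) m₂ c).length :=
      two_le_length_of_all_mem hcard (fun b => hm₂ c b)
    have h1 : ∀ d, max L 1 ≤ (compFrom τ n m d).length := by
      intro d
      have := hm d
      have : (compFrom τ n m d).length ≠ 0 :=
        fun h => (nonErasing_compFrom hner n m d) (List.length_eq_zero_iff.mp h)
      omega
    have := length_wordApply_ge_of_mem (nonErasing_compFrom hner n m) h1 h2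
    omega

/-- All letters occur many times, from primitivity. -/
lemma bigCount [Fintype A] [DecidableEq A] {τ : ℕ → A → List A} (hcard : 2 ≤ Fintype.card A)
    (hner : ∀ k, NonErasing (τ k)) (hprim : IsPrimitive τ) (n L : ℕ) :
    ∃ m : ℕ, 0 < m ∧ ∀ c a : A, L ≤ (compFrom τ n m c).count a := by
  obtain ⟨m₁, hm₁pos, hm₁⟩ := hprim n
  obtain ⟨m₂, hm₂⟩ := minLen hcard hner hprim (n + m₁) L
  refine ⟨m₁ + m₂, by omega, fun c a => ?_⟩
  rw [compFrom_add]
  have : ∀ d, a ∈ compFrom τ n m₁ d := fun d => hm₁ d a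
  calc L ≤ (compFrom τ (n + m₁) m₂ c).length := hm₂ c
    _ ≤ _ := count_wordApply_ge this _

lemma bigCount_succ [DecidableEq A] {τ : ℕ → A → List A} (hner : ∀ k, NonErasing (τ k))
    {n m L : ℕ} (h : ∀ c a : A, L ≤ (compFrom τ n m c).count a) :
    ∀ c a : A, L ≤ (compFrom τ n (m + 1) c).count a := by
  intro c a
  show L ≤ (wordApply (compFrom τ n m) (τ (n + m) c)).count a
  have hne := hner (n + m) c
  match hd : τ (n + m) c with
  | [] => exact absurd hd hne
  | d :: t =>
    rw [wordApply_cons, List.count_append]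
    have := h d a
    omega

lemma bigCount_even [Fintype A] [DecidableEq A] {τ : ℕ → A → List A} (hcard : 2 ≤ Fintype.card A)
    (hner : ∀ k, NonErasing (τ k)) (hprim : IsPrimitive τ) (n L : ℕ) :
    ∃ m : ℕ, 0 < m ∧ ∀ c a : A, L ≤ (compFrom τ n (2 * m) c).count a := by
  obtain ⟨m, hmpos, hm⟩ := bigCount hcard hner hprim n L
  rcases Nat.even_or_odd m with ⟨k, hk⟩ | ⟨k, hk⟩
  · exact ⟨k, by omega, by rw [show 2 * k = m by omega]; exact hm⟩
  · refine ⟨k + 1, by omega, ?_⟩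
    rw [show 2 * (k + 1) = m + 1 by omega]
    exact bigCount_succ hner hm

/-- If `a` occurs at least `k+1` times in `u`, it occurs with at least `k` letters after it. -/
lemma split_after [DecidableEq A] {a : A} {u : List A} :
    ∀ {k : ℕ}, k + 1 ≤ u.count a → ∃ γ δ : List A, u = γ ++ a :: δ ∧ k ≤ δ.length := by
  induction u with
  | nil => intro k h; simp at h
  | cons c t ih =>
    intro k h
    by_cases h2 : k + 1 ≤ t.count a
    · obtain ⟨γ, δ, hu, hδ⟩ := ih h2
      exact ⟨c :: γ, δ, by rw [hu]; rfl, hδ⟩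
    · have hc : c = a := by
        rw [List.count_cons] at h
        by_contra hne
        simp [hne, Ne.symm hne] at h
        omega
      have hk : k ≤ t.count a := by
        rw [List.count_cons, hc] at h
        simp at h
        omega
      refine ⟨[], t, by simp [hc], ?_⟩
      calc k ≤ t.count a := hk
        _ ≤ t.length := List.count_le_length
  
/-- If `a` occurs at least `k+1` times in `u`, it occurs with at least `k` letters before it. -/
lemma split_before [DecidableEq A] {a : A} {u : List A} {k : ℕ} (h : k + 1 ≤ u.count a) :
    ∃ γ δ : List A, u = γ ++ a :: δ ∧ k ≤ γ.length := by
  have hr : k + 1 ≤ u.reverse.count a := by rwa [List.count_reverse]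
  obtain ⟨γ, δ, hu, hδ⟩ := split_after hr
  refine ⟨δ.reverse, γ.reverse, ?_, by simpa using hδ⟩
  have := congrArg List.reverse hu
  simpa using this

lemma sadicLang_tilde_subset [Fintype A] [DecidableEq A] (hcard : 2 ≤ Fintype.card A)
    {τ : ℕ → A → List A} (hner : ∀ k, NonErasing (τ k)) (hprim : IsPrimitive τ)
    (hlp : ∀ k, IsLeftProper (τ k)) :
    SadicLang (tildeSeq τ) ⊆ SadicLang τ := by
  rintro w ⟨n, a, hw⟩
  obtain ⟨p, hp⟩ := conj hner hlp 0 n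
  rw [show 2 * 0 = 0 from rfl] at hp
  set X := compFrom (tildeSeq τ) 0 n with hXdef
  set Y := compFrom τ 0 (2 * n) with hYdef
  obtain ⟨m, hmpos, hm⟩ := bigCount hcard hner hprim (2 * n) (p.length + 1)
  have hA : Nonempty A := Fintype.card_pos_iff.mp (by omega)
  obtain ⟨c⟩ := hA
  obtain ⟨α, δ, hu, hδ⟩ := split_after (hm c a)
  have hXa : p ++ X a = Y a ++ p := by
    have := hp [a]; rwa [wordApply_singleton, wordApply_singleton] at this
  have hpXδ := hp δ
  have hlen : p.length ≤ (wordApply Y δ).length := by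
    have h1 : δ.length ≤ (wordApply X δ).length :=
      length_le_length_wordApply (nonErasing_compFrom (nonErasing_tildeSeq hner) 0 n) δ
    have h2 := congrArg List.length hpXδ
    simp only [List.length_append] at h2
    omega
  have hpre : p <+: wordApply Y δ :=
    List.prefix_of_prefix_length_le ⟨wordApply X δ, hpXδ⟩ (List.prefix_append _ _) hlen
  obtain ⟨t, ht⟩ := hpre
  have hinf1 : X a <:+ Y a ++ p := ⟨p, hXa⟩
  have hinf2 : Y a ++ p <+: Y a ++ wordApply Y δ :=
    ⟨t, by rw [List.append_assoc, ht]⟩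
  have hbig : compFrom τ 0 (2 * n + m) c
      = wordApply Y α ++ (Y a ++ wordApply Y δ) := by
    rw [compFrom_add, Nat.zero_add, hu, wordApply_append, wordApply_cons]
  have hinf : X a <:+: compFrom τ 0 (2 * n + m) c := by
    rw [hbig]
    exact (hinf1.isInfix.trans hinf2.isInfix).trans (List.suffix_append _ _).isInfix
  exact ⟨2 * n + m, c, hw.trans hinf⟩

lemma sadicLang_subset_tilde [Fintype A] [DecidableEq A] (hcard : 2 ≤ Fintype.card A)
    {τ : ℕ → A → List A} (hner : ∀ k, NonErasing (τ k)) (hprim : IsPrimitive τ)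
    (hlp : ∀ k, IsLeftProper (τ k)) :
    SadicLang τ ⊆ SadicLang (tildeSeq τ) := by
  rintro w ⟨N, a, hw⟩
  -- Step 1: push `a` to an even level
  obtain ⟨m₀, hm₀pos, hm₀⟩ := hprim N
  have h1 : ∀ c a' : A, 1 ≤ (compFrom τ N m₀ c).count a' :=
    fun c a' => List.one_le_count_iff.mpr (hm₀ c a')
  obtain ⟨m₁, hNm₁, hcnt⟩ : ∃ m₁, (∃ n, N + m₁ = 2 * n) ∧
      ∀ c a' : A, 1 ≤ (compFrom τ N m₁ c).count a' := by
    rcases Nat.even_or_odd (N + m₀) with ⟨k, hk⟩ | ⟨k, hk⟩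
    · exact ⟨m₀, ⟨k, by omega⟩, h1⟩
    · exact ⟨m₀ + 1, ⟨k + 1, by omega⟩, bigCount_succ hner h1⟩
  obtain ⟨n, hn⟩ := hNm₁
  have hmem : a ∈ compFrom τ N m₁ a := List.count_pos_iff.mp (hcnt a a)
  obtain ⟨α₀, δ₀, hsplit₀⟩ := List.append_of_mem hmem
  have hw2 : w <:+: compFrom τ 0 (2 * n) a := by
    have hYeq : compFrom τ 0 (2 * n) a
        = wordApply (compFrom τ 0 N) α₀
          ++ (compFrom τ 0 N a ++ wordApply (compFrom τ 0 N) δ₀) := by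
      rw [← hn, compFrom_add, Nat.zero_add, hsplit₀, wordApply_append, wordApply_cons]
    rw [hYeq]
    refine hw.trans ?_
    exact ((List.prefix_append _ _).isInfix.trans (List.suffix_append _ _).isInfix)
  -- Step 2: transfer to the tilde sequence
  obtain ⟨p, hp⟩ := conj hner hlp 0 n
  rw [show 2 * 0 = 0 from rfl] at hp
  set X := compFrom (tildeSeq τ) 0 n with hXdef
  set Y := compFrom τ 0 (2 * n) with hYdef
  obtain ⟨m, hmpos, hm⟩ := bigCount_even hcard hner hprim (2 * n) (p.length + 1)
  have hcnt2 : p.length + 1 ≤ (compFrom (tildeSeq τ) n m a).count a := by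
    rw [count_conj hner hlp n m a a]
    exact hm a a
  obtain ⟨γ, δ, hu, hγ⟩ := split_before hcnt2
  -- p is a suffix of wordApply X γ
  have hpXγ := hp γ
  have hlenγ : p.length ≤ (wordApply X γ).length := by
    have h2 : γ.length ≤ (wordApply X γ).length :=
      length_le_length_wordApply (nonErasing_compFrom (nonErasing_tildeSeq hner) 0 n) γ
    omega
  have hsuf : p <:+ wordApply X γ :=
    List.suffix_of_suffix_length_le ⟨wordApply Y γ, hpXγ.symm⟩
      (List.suffix_append _ _) hlenγ
  obtain ⟨t, ht⟩ := hsuf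
  have hXa : p ++ X a = Y a ++ p := by
    have := hp [a]; rwa [wordApply_singleton, wordApply_singleton] at this
  have hinf1 : Y a <+: p ++ X a := ⟨p, hXa.symm⟩
  have hinf2 : p ++ X a <:+ wordApply X γ ++ X a :=
    ⟨t, by rw [← List.append_assoc, ht]⟩
  have hbig : compFrom (tildeSeq τ) 0 (n + m) a
      = wordApply X γ ++ X a ++ wordApply X δ := by
    rw [compFrom_add, Nat.zero_add, hu, wordApply_append, wordApply_cons]
    simp [List.append_assoc]
    rfl
  have hinf : Y a <:+: compFrom (tildeSeq τ) 0 (n + m) a := by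
    rw [hbig]
    exact (hinf1.isInfix.trans hinf2.isInfix).trans (List.prefix_append _ _).isInfix
  exact ⟨n + m, a, hw2.trans hinf⟩

end Aux

theorem stmt2 {A : Type*} [Fintype A] [DecidableEq A] (hcard : 2 ≤ Fintype.card A)
    (τ : ℕ → A → List A) (hner : ∀ n, NonErasing (τ n)) (hgrow : GrowsUnbounded τ)
    (hprim : IsPrimitive τ) (huni : ∀ n, IsUnimodular (τ n))
    (hlp : ∀ n, IsLeftProper (τ n)) :
    IsPrimitive (tildeSeq τ) ∧ (∀ n, IsUnimodular (tildeSeq τ n)) ∧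
      (∀ n, IsProper (tildeSeq τ n)) ∧ SadicShift (tildeSeq τ) = SadicShift τ := by
  refine ⟨?_, ?_, ?_, ?_⟩
  · -- primitivity
    intro n
    obtain ⟨m, hmpos, hm⟩ := bigCount_even hcard hner hprim (2 * n) 1
    refine ⟨m, hmpos, fun a b => ?_⟩
    have h1 := count_conj hner hlp n m a b
    have h2 := hm a b
    exact List.count_pos_iff.mp (by omega)
  · -- unimodularity
    intro n
    have h : incMat (tildeSeq τ n) = incMat (τ (2 * n)) * incMat (τ (2 * n + 1)) := by
      show incMat (morComp (τ (2 * n)) (barMor (τ (2 * n + 1)))) = _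
      rw [incMat_morComp, incMat_barMor]
    have hd : (incMat (tildeSeq τ n)).det
        = (incMat (τ (2 * n))).det * (incMat (τ (2 * n + 1))).det := by
      rw [h, Matrix.det_mul]
    rcases huni (2 * n) with h1 | h1 <;> rcases huni (2 * n + 1) with h2 | h2 <;>
      rw [IsUnimodular, hd, h1, h2] <;> norm_num
  · -- properness
    intro n
    obtain ⟨b₀, hb₀⟩ := hlp (2 * n)
    obtain ⟨b₁, hb₁⟩ := hlp (2 * n + 1)
    constructor
    · refine ⟨b₀, fun a => ?_⟩
      show (wordApply (τ (2 * n)) (barMor (τ (2 * n + 1)) a)).head? = some b₀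
      have hne := nonErasing_barMor (hner (2 * n + 1)) a
      match hd : barMor (τ (2 * n + 1)) a with
      | [] => exact absurd hd hne
      | d :: t =>
        rw [wordApply_cons, List.head?_append_of_ne_nil _ (hner (2 * n) d)]
        exact hb₀ d
    · refine ⟨(τ (2 * n) b₁).getLast (hner (2 * n) b₁), fun a => ?_⟩
      show (wordApply (τ (2 * n)) (barMor (τ (2 * n + 1)) a)).getLast? = _
      have hρa : τ (2 * n + 1) a = b₁ :: (τ (2 * n + 1) a).tail := by
        have := hb₁ a
        cases h : τ (2 * n + 1) a with
        | nil => rw [h] at this; simp at this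
        | cons c t =>
          rw [h] at this
          simp only [List.head?_cons, Option.some.injEq] at this
          simp [this]
      have hbar : barMor (τ (2 * n + 1)) a = (τ (2 * n + 1) a).tail ++ [b₁] := by
        unfold barMor
        rw [show (τ (2 * n + 1) a).take 1 = [b₁] by rw [hρa]; rfl]
      rw [hbar, wordApply_append, wordApply_singleton,
        List.getLast?_append_of_ne_nil _ (hner (2 * n) b₁),
        List.getLast?_eq_getLast (hner (2 * n) b₁)]
  · -- equality of subshifts
    have hLang : SadicLang (tildeSeq τ) = SadicLang τ :=
      Set.Subset.antisymm (sadicLang_tilde_subset hcard hner hprim hlp)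
        (sadicLang_subset_tilde hcard hner hprim hlp)
    unfold SadicShift
    rw [hLang]
end

section
/- Let (X,S) be a primitive unimodular proper S-adic subshift over the alphabet A. Then every continuous function f : X → ℤ is cohomologous to an integer linear combination of characteristic functions of letter cylinders, i.e., there exist integers (α_a)_{a∈A} and g ∈ C(X,ℤ) such that f = (g∘S − g) + ∑_{a∈A} α_a χ_[a]. -/
open MeasureTheory Filter

open Filter

namespace Stmt6Aux

variable {A : Type*}

/-! ### Basic word lemmas -/

theorem wordApply_nil (σ : A → List A) : wordApply σ [] = [] := rfl

theorem wordApply_cons (σ : A → List A) (c : A) (l : List A) :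
    wordApply σ (c :: l) = σ c ++ wordApply σ l := rfl

theorem wordApply_append (σ : A → List A) (l1 l2 : List A) :
    wordApply σ (l1 ++ l2) = wordApply σ l1 ++ wordApply σ l2 := by
  simp [wordApply]

theorem wordApply_singleton (σ : A → List A) (a : A) : wordApply σ [a] = σ a := by
  simp [wordApply]

theorem morComp_assoc (σ η θ : A → List A) :
    morComp (morComp σ η) θ = morComp σ (morComp η θ) := by
  funext a
  simp only [morComp, wordApply, List.flatMap_assoc]
  rfl

theorem compFrom_zero (τ : ℕ → A → List A) (n : ℕ) (a : A) :
    compFrom τ n 0 a = [a] := rfl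

theorem compFrom_succ (τ : ℕ → A → List A) (n m : ℕ) :
    compFrom τ n (m+1) = morComp (compFrom τ n m) (τ (n + m)) := rfl

theorem morComp_id (σ : A → List A) (n : ℕ) (τ : ℕ → A → List A) :
    morComp σ (compFrom τ n 0) = σ := by
  funext a
  simp [morComp, compFrom, wordApply]

theorem compFrom_add (τ : ℕ → A → List A) (n i j : ℕ) :
    compFrom τ n (i + j) = morComp (compFrom τ n i) (compFrom τ (n + i) j) := by
  induction j with
  | zero => rw [morComp_id]; rfl
  | succ j ih =>
      have : n + i + j = n + (i + j) := by omega
      rw [show i + (j+1) = (i+j)+1 from rfl, compFrom_succ, ih, compFrom_succ,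
        morComp_assoc, this]

theorem compSeq_split (τ : ℕ → A → List A) (n j : ℕ) :
    compSeq τ (n + j) = morComp (compSeq τ n) (compFrom τ n j) := by
  unfold compSeq
  rw [compFrom_add τ 0 n j, Nat.zero_add]

theorem length_wordApply (σ : A → List A) (l : List A) :
    (wordApply σ l).length = (l.map fun c => (σ c).length).sum := by
  induction l with
  | nil => rfl
  | cons c l ih => simp [wordApply_cons, ih]

theorem nonErasing_compFrom (τ : ℕ → A → List A) (h : ∀ k, NonErasing (τ k)) (n m : ℕ) :
    NonErasing (compFrom τ n m) := by
  induction m with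
  | zero => intro a; simp [compFrom]
  | succ m ih =>
      intro a
      rw [compFrom_succ]
      have h1 : (τ (n+m) a) ≠ [] := h (n+m) a
      obtain ⟨c, l, hcl⟩ : ∃ c l, τ (n+m) a = c :: l := by
        cases hne : τ (n+m) a with
        | nil => exact absurd hne h1
        | cons c l => exact ⟨c, l, rfl⟩
      simp only [morComp, hcl, wordApply_cons]
      intro hco
      have := List.append_eq_nil_iff.mp hco
      exact ih c this.1

theorem mem_infix_wordApply (σ : A → List A) {c : A} {l : List A} (h : c ∈ l) :
    σ c <:+: wordApply σ l := by
  obtain ⟨s, t, rfl⟩ := List.append_of_mem h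
  rw [wordApply_append, wordApply_cons]
  exact ⟨wordApply σ s, wordApply σ t, by simp⟩

/-- sum of a function over a list, grouped by letter counts. -/
theorem sum_map_count [Fintype A] [DecidableEq A] (l : List A) (g : A → ℤ) :
    (l.map g).sum = ∑ c, (l.count c : ℤ) * g c := by
  induction l with
  | nil => simp
  | cons a l ih =>
      simp only [List.map_cons, List.sum_cons, ih]
      have key : ∀ c : A, (((a::l).count c : ℕ) : ℤ) * g c
          = (l.count c : ℤ) * g c + (if c = a then g c else 0) := by
        intro c
        by_cases h : c = a
        · subst h
          simp [List.count_cons]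
          ring
        · simp [List.count_cons, h, Ne.symm h]
      rw [Finset.sum_congr rfl fun c _ => key c, Finset.sum_add_distrib,
        Finset.sum_ite_eq' Finset.univ a g]
      simp [add_comm]

theorem count_wordApply [Fintype A] [DecidableEq A] (σ : A → List A) (l : List A) (b : A) :
    ((wordApply σ l).count b : ℤ) = ∑ c, (l.count c : ℤ) * ((σ c).count b : ℤ) := by
  have : ((wordApply σ l).count b : ℤ) = (l.map fun c => ((σ c).count b : ℤ)).sum := by
    induction l with
    | nil => simp [wordApply]
    | cons a l ih => simp [wordApply_cons, List.count_append, ih]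
  rw [this, sum_map_count]

theorem incMat_morComp [Fintype A] [DecidableEq A] (σ η : A → List A) :
    incMat (morComp σ η) = incMat σ * incMat η := by
  ext b a
  simp only [incMat, Matrix.of_apply, Matrix.mul_apply, morComp]
  rw [count_wordApply]
  exact Finset.sum_congr rfl fun c _ => by ring

theorem det_compFrom [Fintype A] [DecidableEq A] (τ : ℕ → A → List A)
    (huni : ∀ k, IsUnimodular (τ k)) (n m : ℕ) :
    IsUnimodular (compFrom τ n m) := by
  induction m with
  | zero =>
      left
      have h1 : incMat (compFrom τ n 0) = (1 : Matrix A A ℤ) := by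
        ext b a
        simp [incMat, compFrom, Matrix.one_apply, List.count_singleton]
        split <;> simp_all [eq_comm]
      show (incMat (compFrom τ n 0)).det = 1
      rw [h1, Matrix.det_one]
  | succ m ih =>
      have h1 : incMat (compFrom τ n (m+1)) = incMat (compFrom τ n m) * incMat (τ (n+m)) := by
        rw [compFrom_succ, incMat_morComp]
      have h2 := huni (n+m)
      unfold IsUnimodular at *
      rw [h1, Matrix.det_mul]
      rcases ih with h3 | h3 <;> rcases h2 with h4 | h4 <;> rw [h3, h4] <;> simp

end Stmt6Aux

namespace Stmt6Aux

variable {A : Type*}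

/-- Extend a finite word by an infinite tail. -/
def ext : List A → (ℕ → A) → ℕ → A
  | [], C => C
  | a :: W, C => fun i => match i with
      | 0 => a
      | i+1 => ext W C i

theorem ext_nil (C : ℕ → A) : ext [] C = C := rfl

theorem ext_cons_zero (a : A) (W : List A) (C : ℕ → A) : ext (a :: W) C 0 = a := rfl

theorem ext_cons_succ (a : A) (W : List A) (C : ℕ → A) (i : ℕ) :
    ext (a :: W) C (i+1) = ext W C i := rfl

theorem ext_append (W1 W2 : List A) (C : ℕ → A) :
    ext (W1 ++ W2) C = ext W1 (ext W2 C) := by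
  induction W1 with
  | nil => rfl
  | cons a W ih =>
      funext i
      cases i with
      | zero => rfl
      | succ i => simp [List.cons_append, ext_cons_succ, ih]

theorem ext_get (W : List A) (C : ℕ → A) (i : ℕ) (h : i < W.length) :
    ext W C i = W.get ⟨i, h⟩ := by
  induction W generalizing i with
  | nil => simp at h
  | cons a W ih =>
      cases i with
      | zero => rfl
      | succ i =>
          rw [ext_cons_succ, ih i (by simpa using Nat.lt_of_succ_lt_succ (by simpa using h))]
          simp

theorem ext_add (W : List A) (C : ℕ → A) (k : ℕ) :
    ext W C (W.length + k) = C k := by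
  induction W with
  | nil => simp [ext_nil]
  | cons a W ih =>
      have h : (a :: W).length + k = (W.length + k) + 1 := by simp; omega
      rw [h, ext_cons_succ, ih]

theorem ext_of_prefix {P W : List A} (C D : ℕ → A) (h : P <+: W) (k : ℕ)
    (hk : k < P.length) : ext W C k = ext P D k := by
  obtain ⟨t, rfl⟩ := h
  rw [ext_append, ext_get P (ext t C) k hk, ext_get P D k hk]

section Isum

variable {L : ℕ} (F : (Fin (L+1) → A) → ℤ) (α : A → ℤ)

/-- Sum of the "local rule minus letter weight" along a window of an infinite word. -/
def isum (u : ℕ → A) (s M : ℕ) : ℤ :=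
  ∑ i ∈ Finset.range M, (F (fun j => u (s + i + j)) - α (u (s + i)))

theorem isum_add (u : ℕ → A) (s M1 M2 : ℕ) :
    isum F α u s (M1 + M2) = isum F α u s M1 + isum F α u (s + M1) M2 := by
  unfold isum
  rw [Finset.sum_range_add]
  congr 1
  refine Finset.sum_congr rfl fun i _ => ?_
  have h1 : s + (M1 + i) = s + M1 + i := by omega
  rw [h1]

theorem isum_congr (u v : ℕ → A) (s M : ℕ) (h : ∀ k, k < M + L → u (s + k) = v (s + k)) :
    isum F α u s M = isum F α v s M := by
  unfold isum
  refine Finset.sum_congr rfl fun i hi => ?_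
  have hi' := Finset.mem_range.mp hi
  have h2 : u (s + i) = v (s + i) := h i (by omega)
  have h3 : (fun j : Fin (L+1) => u (s + i + j)) = fun j : Fin (L+1) => v (s + i + j) := by
    funext j
    have hj : (j : ℕ) ≤ L := Nat.lt_succ_iff.mp j.2
    have : s + i + (j : ℕ) = s + (i + (j : ℕ)) := by omega
    rw [this, h (i + (j : ℕ)) (by omega), ← this]
  rw [h2, h3]

theorem isum_ext_shift (W : List A) (C : ℕ → A) (s M : ℕ) :
    isum F α (ext W C) (W.length + s) M = isum F α C s M := by
  unfold isum
  refine Finset.sum_congr rfl fun i _ => ?_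
  have h2 : ∀ k : ℕ, ext W C (W.length + s + i + k) = C (s + i + k) := by
    intro k
    have : W.length + s + i + k = W.length + (s + i + k) := by omega
    rw [this, ext_add]
  have h3 : ext W C (W.length + s + i) = C (s + i) := by
    have := h2 0
    simpa using this
  simp only [h2, h3]

theorem isum_start (u : ℕ → A) (s M : ℕ) :
    isum F α u s M = isum F α (fun k => u (s + k)) 0 M := by
  unfold isum
  refine Finset.sum_congr rfl fun i _ => ?_
  have h1 : ∀ k : ℕ, u (s + i + k) = (fun k => u (s + k)) (0 + i + k) := by
    intro k; simp; congr 1; omega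
  have h2 : u (s + i) = (fun k => u (s + k)) (0 + i) := by simp
  simp only [← h1, ← h2]

/-- Sum along a whole finite word, with an infinite continuation. -/
def esum (W : List A) (C : ℕ → A) : ℤ := isum F α (ext W C) 0 W.length

theorem esum_append (W1 W2 : List A) (C : ℕ → A) :
    esum F α (W1 ++ W2) C = esum F α W1 (ext W2 C) + esum F α W2 C := by
  unfold esum
  rw [ext_append, List.length_append, isum_add]
  congr 1
  have h0 : (0 : ℕ) + W1.length = W1.length + 0 := by omega
  rw [h0, isum_ext_shift]

theorem esum_congr_cont (W : List A) (C C' : ℕ → A) (h : ∀ k, k < L → C k = C' k) :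
    esum F α W C = esum F α W C' := by
  unfold esum
  refine isum_congr F α _ _ _ _ fun k hk => ?_
  simp only [Nat.zero_add]
  by_cases hlt : k < W.length
  · rw [ext_get W C k hlt, ext_get W C' k hlt]
  · push_neg at hlt
    obtain ⟨t, rfl⟩ : ∃ t, k = W.length + t := ⟨k - W.length, by omega⟩
    rw [ext_add, ext_add]
    exact h t (by omega)

theorem esum_nil (C : ℕ → A) : esum F α [] C = 0 := by
  unfold esum isum
  simp

/-- The uniform bound on single terms. -/
def Bnd [Fintype A] [DecidableEq A] : ℤ :=
  (∑ u : Fin (L+1) → A, |F u|) + (∑ a, |α a|)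

theorem Bnd_nonneg [Fintype A] [DecidableEq A] : 0 ≤ Bnd F α := by
  unfold Bnd
  positivity

theorem term_le_Bnd [Fintype A] [DecidableEq A] (w : Fin (L+1) → A) (a : A) :
    |F w - α a| ≤ Bnd F α := by
  have h1 : |F w| ≤ ∑ u : Fin (L+1) → A, |F u| :=
    Finset.single_le_sum (fun u _ => abs_nonneg (F u)) (Finset.mem_univ w)
  have h2 : |α a| ≤ ∑ b, |α b| :=
    Finset.single_le_sum (fun b _ => abs_nonneg (α b)) (Finset.mem_univ a)
  calc |F w - α a| ≤ |F w| + |α a| := abs_sub _ _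
    _ ≤ _ := by unfold Bnd; omega

theorem abs_isum_le [Fintype A] [DecidableEq A] (u : ℕ → A) (s M : ℕ) :
    |isum F α u s M| ≤ (M : ℤ) * Bnd F α := by
  unfold isum
  calc |∑ i ∈ Finset.range M, (F (fun j => u (s + i + j)) - α (u (s + i)))|
      ≤ ∑ i ∈ Finset.range M, |F (fun j => u (s + i + j)) - α (u (s + i))| :=
        Finset.abs_sum_le_sum_abs _ _
    _ ≤ ∑ _i ∈ Finset.range M, Bnd F α :=
        Finset.sum_le_sum fun i _ => term_le_Bnd F α _ _
    _ = (M : ℤ) * Bnd F α := by simp [mul_comm]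

end Isum

end Stmt6Aux

namespace Stmt6Aux

variable {A : Type*}

section Blocks

variable {L : ℕ} (F : (Fin (L+1) → A) → ℤ) (α : A → ℤ)
variable (ρ : A → List A) (P : List A) (D : ℕ → A)

/-- Splitting a prefix position of a concatenation of blocks along block boundaries. -/
theorem prefix_split :
    ∀ (V : List A) (d : ℕ), d ≤ (wordApply ρ V).length →
    ∃ V1 V2 e, V = V1 ++ V2 ∧ d = (wordApply ρ V1).length + e ∧
      ((V2 = [] ∧ e = 0) ∨ (∃ c0 V3, V2 = c0 :: V3 ∧ e ≤ (ρ c0).length)) := by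
  intro V
  induction V with
  | nil =>
      intro d hd
      simp [wordApply] at hd
      exact ⟨[], [], 0, by simp, by simp [wordApply, hd], Or.inl ⟨rfl, rfl⟩⟩
  | cons c V' ih =>
      intro d hd
      by_cases hc : d ≤ (ρ c).length
      · exact ⟨[], c :: V', d, by simp, by simp [wordApply], Or.inr ⟨c, V', rfl, hc⟩⟩
      · push_neg at hc
        have hlen : (wordApply ρ (c :: V')).length = (ρ c).length + (wordApply ρ V').length := by
          rw [wordApply_cons, List.length_append]
        obtain ⟨V1, V2, e, hV, he, hcase⟩ := ih (d - (ρ c).length) (by omega)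
        refine ⟨c :: V1, V2, e, by simp [hV], ?_, hcase⟩
        have h2 : (wordApply ρ (c :: V1)).length = (ρ c).length + (wordApply ρ V1).length := by
          rw [wordApply_cons, List.length_append]
        clear hcase ih hd hlen
        omega

variable (hP : ∀ c, P <+: ρ c) (hPL : L ≤ P.length)
variable (hE : ∀ c, esum F α (ρ c) (ext P D) = 0)

include hP hPL hE in
/-- The sum over a full concatenation of blocks vanishes, provided the continuation
starts (on the first `L` symbols) like the common prefix `P`. -/
theorem esum_blocks_zero :
    ∀ (V : List A) (C : ℕ → A), (∀ k, k < L → C k = ext P D k) →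
      esum F α (wordApply ρ V) C = 0 := by
  intro V
  induction V with
  | nil => intro C _; rw [wordApply_nil]; exact esum_nil F α C
  | cons c V' ih =>
      intro C hC
      rw [wordApply_cons, esum_append]
      have h2 : esum F α (wordApply ρ V') C = 0 := ih C hC
      have h1 : esum F α (ρ c) (ext (wordApply ρ V') C) = esum F α (ρ c) (ext P D) := by
        refine esum_congr_cont F α _ _ _ fun k hk => ?_
        cases V' with
        | nil => rw [wordApply_nil, ext_nil]; exact hC k hk
        | cons c' V'' =>
            have hpre : P <+: wordApply ρ (c' :: V'') := by
              rw [wordApply_cons]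
              exact (hP c').trans (List.prefix_append _ _)
            exact ext_of_prefix C D hpre k (by omega)
      rw [h1, hE c, h2, add_zero]

variable (R : ℕ) (hR : ∀ c, (ρ c).length ≤ R)

include hP hPL hE hR in
theorem isum_blocks_prefix_bound [Fintype A] [DecidableEq A] :
    ∀ (V : List A) (d : ℕ), d ≤ (wordApply ρ V).length →
      |isum F α (ext (wordApply ρ V) (ext P D)) 0 d| ≤ (R : ℤ) * Bnd F α := by
  intro V d hd
  obtain ⟨V1, V2, e, hV, hde, hcase⟩ := prefix_split ρ V d hd
  have hsplit : wordApply ρ V = wordApply ρ V1 ++ wordApply ρ V2 := by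
    rw [hV, wordApply_append]
  have hu : ext (wordApply ρ V) (ext P D)
      = ext (wordApply ρ V1) (ext (wordApply ρ V2) (ext P D)) := by
    rw [hsplit, ext_append]
  have hiso : isum F α (ext (wordApply ρ V) (ext P D)) 0 d
      = isum F α (ext (wordApply ρ V) (ext P D)) 0 (wordApply ρ V1).length
        + isum F α (ext (wordApply ρ V) (ext P D)) (0 + (wordApply ρ V1).length) e := by
    rw [hde]
    exact isum_add F α _ 0 _ e
  have hfirst : isum F α (ext (wordApply ρ V) (ext P D)) 0 (wordApply ρ V1).length = 0 := by
    rw [hu]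
    show esum F α (wordApply ρ V1) (ext (wordApply ρ V2) (ext P D)) = 0
    refine esum_blocks_zero F α ρ P D hP hPL hE V1 _ fun k hk => ?_
    cases V2 with
    | nil => rw [wordApply_nil, ext_nil]
    | cons c0 V3 =>
        have hpre : P <+: wordApply ρ (c0 :: V3) := by
          rw [wordApply_cons]
          exact (hP c0).trans (List.prefix_append _ _)
        exact ext_of_prefix _ D hpre k (by omega)
  have he : e ≤ R := by
    rcases hcase with ⟨_, he0⟩ | ⟨c0, V3, _, hec0⟩
    · omega
    · exact le_trans hec0 (hR c0)
  have hsec : |isum F α (ext (wordApply ρ V) (ext P D)) (0 + (wordApply ρ V1).length) e|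
      ≤ (R : ℤ) * Bnd F α := by
    calc |isum F α (ext (wordApply ρ V) (ext P D)) (0 + (wordApply ρ V1).length) e|
        ≤ (e : ℤ) * Bnd F α := abs_isum_le F α _ _ e
      _ ≤ (R : ℤ) * Bnd F α := by
          apply mul_le_mul_of_nonneg_right _ (Bnd_nonneg F α)
          exact_mod_cast he
  rw [hiso, hfirst, zero_add]
  exact hsec

include hP hPL hE hR in
theorem isum_blocks_bound [Fintype A] [DecidableEq A] :
    ∀ (V : List A) (d M : ℕ), d + M ≤ (wordApply ρ V).length →
      |isum F α (ext (wordApply ρ V) (ext P D)) d M| ≤ 2 * (R : ℤ) * Bnd F α := by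
  intro V d M hdM
  have h1 := isum_blocks_prefix_bound F α ρ P D hP hPL hE R hR V (d + M) hdM
  have h2 := isum_blocks_prefix_bound F α ρ P D hP hPL hE R hR V d (by omega)
  have hiso : isum F α (ext (wordApply ρ V) (ext P D)) 0 (d + M)
      = isum F α (ext (wordApply ρ V) (ext P D)) 0 d
        + isum F α (ext (wordApply ρ V) (ext P D)) (0 + d) M :=
    isum_add F α _ 0 d M
  have h0 : (0 : ℕ) + d = d := by omega
  rw [h0] at hiso
  have : isum F α (ext (wordApply ρ V) (ext P D)) d M
      = isum F α (ext (wordApply ρ V) (ext P D)) 0 (d + M)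
        - isum F α (ext (wordApply ρ V) (ext P D)) 0 d := by omega
  rw [this]
  calc |_ - _| ≤ |isum F α (ext (wordApply ρ V) (ext P D)) 0 (d + M)|
        + |isum F α (ext (wordApply ρ V) (ext P D)) 0 d| := abs_sub _ _
    _ ≤ 2 * (R : ℤ) * Bnd F α := by linarith [h1, h2]

end Blocks

/-! ### Extracting a full block from a long factor -/

theorem infix_of_position {U w Y Q m T : List A} {big : List A}
    (h1 : big = U ++ (w ++ Y)) (h2 : big = Q ++ (m ++ T))
    (hQ : U.length ≤ Q.length) (hQm : Q.length + m.length ≤ U.length + w.length) :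
    m <:+: w := by
  set k := Q.length - U.length with hk
  have hkw : k + m.length ≤ w.length := by omega
  have hdrop : m ++ T = (w.drop k) ++ Y := by
    have e1 : big.drop Q.length = m ++ T := by
      rw [h2, List.drop_left]
    have e2 : big.drop Q.length = (w.drop k) ++ Y := by
      rw [h1, List.drop_append]
      rw [List.drop_eq_nil_of_le hQ, List.nil_append]
      rw [List.drop_append]
      have : Q.length - U.length - w.length = 0 := by omega
      rw [this, List.drop_zero]
    rw [← e1, e2]
  have htake : m = (w.drop k).take m.length := by
    have e3 : (m ++ T).take m.length = m := List.take_left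
    rw [hdrop] at e3
    rw [List.take_append] at e3
    have hlen : m.length ≤ (w.drop k).length := by
      rw [List.length_drop]; omega
    have : m.length - (w.drop k).length = 0 := by omega
    rw [this, List.take_zero, List.append_nil] at e3
    exact e3.symm
  rw [htake]
  exact ((List.take_prefix _ _).isInfix).trans ((List.drop_suffix _ _).isInfix)

theorem block_infix_of_long (ρ : A → List A) (R : ℕ) (hR : ∀ c, (ρ c).length ≤ R)
    (V U w Y : List A) (h : wordApply ρ V = U ++ (w ++ Y)) (hw : 2 * R + 1 ≤ w.length) :
    ∃ c, ρ c <:+: w := by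
  have hlen : (wordApply ρ V).length = U.length + (w.length + Y.length) := by
    rw [h]; simp
  obtain ⟨V1, V2, e, hV, hde, hcase⟩ := prefix_split ρ V U.length (by omega)
  rcases hcase with ⟨hV2, he0⟩ | ⟨c0, V3, hV2, hec0⟩
  · exfalso
    rw [hV2, List.append_nil] at hV
    rw [← hV] at hde
    omega
  · cases V3 with
    | nil =>
        exfalso
        rw [hV2] at hV
        have : (wordApply ρ V).length = (wordApply ρ V1).length + (ρ c0).length := by
          rw [hV, wordApply_append, wordApply_cons, wordApply_nil]
          simp
        have := hR c0
        omega
    | cons c1 V4 =>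
        refine ⟨c1, ?_⟩
        have h2 : wordApply ρ V = (wordApply ρ V1 ++ ρ c0) ++ (ρ c1 ++ wordApply ρ V4) := by
          rw [hV, hV2, wordApply_append, wordApply_cons, wordApply_cons]
          simp [List.append_assoc]
        have hQlen : (wordApply ρ V1 ++ ρ c0).length = (wordApply ρ V1).length + (ρ c0).length := by
          simp
        refine infix_of_position h h2 ?_ ?_
        · rw [hQlen]; omega
        · rw [hQlen]
          have h1 := hR c0
          have h2 := hR c1
          omega

end Stmt6Aux

namespace Stmt6Aux

open Matrix

variable {A : Type*}

theorem compSeq_succ (τ : ℕ → A → List A) (n : ℕ) (c : A) :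
    compSeq τ (n+1) c = wordApply (compSeq τ n) (τ n c) := by
  show compFrom τ 0 (n+1) c = _
  rw [compFrom_succ τ 0 n, Nat.zero_add]
  rfl

theorem length_le_of_mem_wordApply (σ : A → List A) {c : A} {l : List A} (h : c ∈ l) :
    (σ c).length ≤ (wordApply σ l).length :=
  (mem_infix_wordApply σ h).length_le

theorem embed_ge [Nonempty A] (τ : ℕ → A → List A) (hprim : IsPrimitive τ) :
    ∀ (j m : ℕ) (a : A), ∃ M c, m + j ≤ M ∧ compSeq τ m a <:+: compSeq τ M c := by
  intro j
  induction j with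
  | zero => intro m a; exact ⟨m, a, by omega, List.infix_refl _⟩
  | succ j ih =>
      intro m a
      obtain ⟨mp, hmp, hall⟩ := hprim m
      obtain ⟨M, c, hM, hinf⟩ := ih (m + mp) (Classical.arbitrary A)
      refine ⟨M, c, by omega, ?_⟩
      have h1 : compSeq τ m a <:+: compSeq τ (m + mp) (Classical.arbitrary A) := by
        rw [compSeq_split]
        exact mem_infix_wordApply _ (hall (Classical.arbitrary A) a)
      exact h1.trans hinf

theorem lang_to_level [Nonempty A] (τ : ℕ → A → List A) (hprim : IsPrimitive τ)
    {w : List A} (hw : w ∈ SadicLang τ) (t : ℕ) :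
    ∃ M c, t ≤ M ∧ w <:+: compSeq τ M c := by
  obtain ⟨m1, a1, hinf⟩ := hw
  obtain ⟨M, c, hM, h2⟩ := embed_ge τ hprim t m1 a1
  exact ⟨M, c, by omega, hinf.trans h2⟩

theorem exists_level_minlen [Fintype A] [Nonempty A] (τ : ℕ → A → List A) (hgrow : GrowsUnbounded τ)
    (hprim : IsPrimitive τ) (Lb : ℕ) :
    ∃ n, ∀ a, Lb ≤ (compSeq τ n a).length := by
  obtain ⟨n0, hn0⟩ := (hgrow.eventually_ge_atTop Lb).exists
  obtain ⟨a0, -, hsup⟩ :=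
    Finset.exists_mem_eq_sup (Finset.univ : Finset A) Finset.univ_nonempty
      (fun a => (compSeq τ n0 a).length)
  obtain ⟨m, hm, hall⟩ := hprim n0
  refine ⟨n0 + m, fun a => ?_⟩
  have h1 : compSeq τ (n0 + m) a = wordApply (compSeq τ n0) (compFrom τ n0 m a) := by
    rw [compSeq_split]; rfl
  have h2 : a0 ∈ compFrom τ n0 m a := hall a a0
  have h3 := length_le_of_mem_wordApply (compSeq τ n0) h2
  rw [h1]
  have h4 : Lb ≤ (compSeq τ n0 a0).length := by
    rw [← hsup]; exact hn0
  omega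

theorem sum_ext_eq_map_sum (W : List A) (C : ℕ → A) (g : A → ℤ) :
    ∑ i ∈ Finset.range W.length, g (ext W C i) = (W.map g).sum := by
  induction W with
  | nil => simp
  | cons a W ih =>
      rw [show (a :: W).length = W.length + 1 from rfl, Finset.sum_range_succ']
      simp only [ext_cons_succ, ext_cons_zero]
      rw [ih]
      simp [add_comm]

theorem get_middle (U w Y : List A) (k : ℕ) (hkw : k < w.length)
    (hbik : U.length + k < (U ++ (w ++ Y)).length) :
    (U ++ (w ++ Y)).get ⟨U.length + k, hbik⟩ = w.get ⟨k, hkw⟩ := by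
  rw [List.get_eq_getElem, List.get_eq_getElem]
  rw [List.getElem_append_right (Nat.le_add_right _ _)]
  have h2 : U.length + k - U.length = k := by omega
  simp_rw [h2]
  rw [List.getElem_append_left hkw]

/-- The key combinatorial estimate: there is a letter-weight vector `α` such that
all "penalized sums" of the local rule `F` along words of the language are bounded. -/
theorem exists_alpha_word_bound [Fintype A] [DecidableEq A] [Nonempty A]
    (τ : ℕ → A → List A) (hner : ∀ k, NonErasing (τ k)) (hgrow : GrowsUnbounded τ)
    (hprim : IsPrimitive τ) (huni : ∀ k, IsUnimodular (τ k)) (hlp : ∀ k, IsLeftProper (τ k))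
    (L : ℕ) (F : (Fin (L+1) → A) → ℤ) :
    ∃ (α : A → ℤ) (Cb : ℤ), ∀ (w : List A), w ∈ SadicLang τ → ∀ M, M + L ≤ w.length →
      ∀ (Dj : ℕ → A), |isum F α (ext w Dj) 0 M| ≤ Cb := by
  classical
  -- level selection
  obtain ⟨n, hmin⟩ := exists_level_minlen τ hgrow hprim L
  obtain ⟨b, hhead⟩ := hlp n
  set ρ : A → List A := compSeq τ (n+1) with hρdef
  set P : List A := compSeq τ n b with hPdef
  set D : ℕ → A := fun _ => (Classical.arbitrary A) with hDdef
  have hρ : ∀ c, ρ c = wordApply (compSeq τ n) (τ n c) := fun c => compSeq_succ τ n c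
  have hP : ∀ c, P <+: ρ c := by
    intro c
    obtain ⟨t, ht⟩ : ∃ t, τ n c = b :: t := by
      cases hc : τ n c with
      | nil =>
          exfalso
          have hh := hhead c
          rw [hc] at hh
          simp at hh
      | cons c0 t =>
          have := hhead c
          rw [hc] at this
          simp at this
          exact ⟨t, by rw [this]⟩
    rw [hρ c, ht, wordApply_cons]
    exact List.prefix_append _ _
  have hPL : L ≤ P.length := hmin b
  set R : ℕ := Finset.univ.sup (fun c => (ρ c).length) with hRdef
  have hR : ∀ c, (ρ c).length ≤ R := fun c => Finset.le_sup (f := fun c => (ρ c).length) (Finset.mem_univ c)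
  -- unimodularity of the composed morphism
  have hdet : IsUnimodular ρ := det_compFrom τ huni 0 (n+1)
  have hunit : IsUnit ((incMat ρ)ᵀ).det := by
    rw [Matrix.det_transpose]
    rcases hdet with h | h <;> rw [h]
    · exact isUnit_one
    · exact isUnit_one.neg
  -- the weight vector
  set β : A → ℤ := fun c =>
    ∑ i ∈ Finset.range (ρ c).length, F (fun j => ext (ρ c) (ext P D) (0 + i + j)) with hβdef
  set α : A → ℤ := ((incMat ρ)ᵀ)⁻¹.mulVec β with hαdef
  have hαβ : ((incMat ρ)ᵀ).mulVec α = β := by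
    rw [hαdef, Matrix.mulVec_mulVec, Matrix.mul_nonsing_inv _ hunit, Matrix.one_mulVec]
  have hE : ∀ c, esum F α (ρ c) (ext P D) = 0 := by
    intro c
    unfold esum isum
    rw [Finset.sum_sub_distrib]
    have hF : ∑ i ∈ Finset.range (ρ c).length,
        F (fun j => ext (ρ c) (ext P D) (0 + i + j)) = β c := rfl
    have hα2 : ∑ i ∈ Finset.range (ρ c).length, α (ext (ρ c) (ext P D) (0 + i))
        = β c := by
      have e1 : ∑ i ∈ Finset.range (ρ c).length, α (ext (ρ c) (ext P D) (0 + i))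
          = ∑ i ∈ Finset.range (ρ c).length, α (ext (ρ c) (ext P D) i) := by
        refine Finset.sum_congr rfl fun i _ => by rw [Nat.zero_add]
      rw [e1, sum_ext_eq_map_sum, sum_map_count]
      have e2 : ∀ c', ((ρ c).count c' : ℤ) = (incMat ρ)ᵀ c c' := by
        intro c'
        simp [incMat, Matrix.transpose_apply]
      calc ∑ c', ((ρ c).count c' : ℤ) * α c'
          = ∑ c', (incMat ρ)ᵀ c c' * α c' := by
            refine Finset.sum_congr rfl fun c' _ => by rw [e2]
        _ = ((incMat ρ)ᵀ).mulVec α c := rfl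
        _ = β c := by rw [hαβ]
    rw [hF, hα2, sub_self]
  -- conclusion
  refine ⟨α, 2 * (R : ℤ) * Bnd F α, ?_⟩
  intro w hw M hM Dj
  -- replace the junk continuation
  have hDjD : isum F α (ext w Dj) 0 M = isum F α (ext w D) 0 M := by
    refine isum_congr F α _ _ 0 M fun k hk => ?_
    rw [Nat.zero_add]
    have hkw : k < w.length := by omega
    rw [ext_get w Dj k hkw, ext_get w D k hkw]
  rw [hDjD]
  -- embed into a concatenation of blocks
  obtain ⟨M2, c2, hM2, hinf⟩ := lang_to_level τ hprim hw (n+1)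
  set V : List A := compFrom τ (n+1) (M2 - (n+1)) c2 with hVdef
  have hbig : compSeq τ M2 c2 = wordApply ρ V := by
    have harith : (n+1) + (M2 - (n+1)) = M2 := by omega
    rw [hρdef, hVdef]
    conv_lhs => rw [← harith]
    rw [compSeq_split]
    rfl
  obtain ⟨U, Y, hUY⟩ := hinf
  have hbig2 : wordApply ρ V = U ++ (w ++ Y) := by
    rw [← hbig, ← hUY, List.append_assoc]
  have hlenbig : (wordApply ρ V).length = U.length + (w.length + Y.length) := by
    rw [hbig2]; simp
  -- identify the sum with a sum inside the blocks
  have hkey : isum F α (ext w D) 0 M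
      = isum F α (ext (wordApply ρ V) (ext P D)) U.length M := by
    rw [isum_start F α (ext (wordApply ρ V) (ext P D)) U.length M]
    refine isum_congr F α _ _ 0 M fun k hk => ?_
    rw [Nat.zero_add]
    have hkw : k < w.length := by omega
    have hbik : U.length + k < (wordApply ρ V).length := by omega
    rw [ext_get w D k hkw, ext_get _ _ _ hbik]
    symm
    have e := List.getElem_of_eq hbig2 hbik
    exact e.trans (get_middle U w Y k hkw (by rw [← hbig2]; exact hbik))
  rw [hkey]
  exact isum_blocks_bound F α ρ P D hP hPL hE R hR V U.length M (by omega)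

end Stmt6Aux

namespace Stmt6Aux

variable {A : Type*}

theorem lang_infix_everywhere [Fintype A] [DecidableEq A] [Nonempty A]
    (τ : ℕ → A → List A) (hprim : IsPrimitive τ) {w : List A} (hw : w ∈ SadicLang τ) :
    ∃ G : ℕ, 1 ≤ G ∧ ∀ w' ∈ SadicLang τ, G ≤ w'.length → w <:+: w' := by
  classical
  obtain ⟨m, a, hinf⟩ := hw
  obtain ⟨mp, hmp, hall⟩ := hprim m
  set M : ℕ := m + mp with hMdef
  have hwall : ∀ b, w <:+: compSeq τ M b := by
    intro b
    refine hinf.trans ?_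
    rw [hMdef, compSeq_split]
    exact mem_infix_wordApply _ (hall b a)
  set ρ' : A → List A := compSeq τ M with hρ'def
  set R : ℕ := Finset.univ.sup (fun c => (ρ' c).length) with hRdef
  have hR : ∀ c, (ρ' c).length ≤ R :=
    fun c => Finset.le_sup (f := fun c => (ρ' c).length) (Finset.mem_univ c)
  refine ⟨2 * R + 1, by omega, ?_⟩
  intro w' hw' hlen
  obtain ⟨M2, c2, hM2, hinf2⟩ := lang_to_level τ hprim hw' M
  set V : List A := compFrom τ M (M2 - M) c2 with hVdef
  have hbig : compSeq τ M2 c2 = wordApply ρ' V := by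
    have harith : M + (M2 - M) = M2 := by omega
    rw [hρ'def, hVdef]
    conv_lhs => rw [← harith]
    rw [compSeq_split]
    rfl
  obtain ⟨U, Y, hUY⟩ := hinf2
  have hbig2 : wordApply ρ' V = U ++ (w' ++ Y) := by
    rw [← hbig, ← hUY, List.append_assoc]
  obtain ⟨c, hc⟩ := block_infix_of_long ρ' R hR V U w' Y hbig2 hlen
  exact (hwall c).trans hc

theorem occurs_everywhere [Fintype A] [DecidableEq A] [Nonempty A]
    (τ : ℕ → A → List A) (hprim : IsPrimitive τ)
    {x : ℤ → A} (hx : x ∈ SadicShift τ) {w : List A} (hw : w ∈ SadicLang τ) (j : ℤ) :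
    ∃ i : ℤ, j ≤ i ∧ ∀ k : Fin w.length, x (i + (k : ℤ)) = w.get k := by
  classical
  obtain ⟨G, hG1, hGall⟩ := lang_infix_everywhere τ hprim hw
  obtain ⟨w', hw'def⟩ : ∃ w', w' = List.ofFn (fun t : Fin G => x (j + (t : ℤ))) := ⟨_, rfl⟩
  have hw'len : w'.length = G := by rw [hw'def]; simp
  have hocc : OccursIn w' x := by
    refine ⟨j, fun k => ?_⟩
    rw [List.get_eq_getElem, List.getElem_of_eq hw'def, List.getElem_ofFn]
  have hw'lang : w' ∈ SadicLang τ := hx w' hocc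
  have hinf : w <:+: w' := hGall w' hw'lang (by omega)
  obtain ⟨s, t, hst⟩ := hinf
  have hst' : w' = s ++ (w ++ t) := by rw [← hst, List.append_assoc]
  refine ⟨j + s.length, by omega, fun k => ?_⟩
  have hk1 : s.length + (k : ℕ) < w'.length := by
    rw [hst']; simp; omega
  have h1 : w'.get ⟨s.length + (k : ℕ), hk1⟩ = x (j + ((s.length + (k : ℕ) : ℕ) : ℤ)) := by
    rw [List.get_eq_getElem, List.getElem_of_eq hw'def, List.getElem_ofFn]
  have h2 : w'.get ⟨s.length + (k : ℕ), hk1⟩ = w.get k := by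
    have e := List.getElem_of_eq hst' hk1
    exact e.trans (get_middle s w t (k : ℕ) k.2 (by rw [← hst']; exact hk1))
  have harith : j + (s.length : ℤ) + (k : ℤ) = j + ((s.length + (k : ℕ) : ℕ) : ℤ) := by
    push_cast
    ring
  rw [harith, ← h1, h2]

end Stmt6Aux

namespace Stmt6Aux

variable {A : Type*} [TopologicalSpace A] [DiscreteTopology A]

theorem isClosed_sadicShift (τ : ℕ → A → List A) : IsClosed (SadicShift τ) := by
  rw [← isOpen_compl_iff, isOpen_iff_forall_mem_open]
  intro x hxc
  have hx : ∃ w, OccursIn w x ∧ w ∉ SadicLang τ := by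
    by_contra h
    push_neg at h
    exact hxc (fun w hw => h w hw)
  obtain ⟨w, ⟨i, hocc⟩, hnl⟩ := hx
  refine ⟨{y | ∀ k : Fin w.length, y (i + (k:ℤ)) = w.get k}, ?_, ?_, hocc⟩
  · intro y hy hyX
    exact hnl (hyX w ⟨i, hy⟩)
  · have heq : {y : ℤ → A | ∀ k : Fin w.length, y (i + (k:ℤ)) = w.get k}
        = ⋂ k : Fin w.length, {y : ℤ → A | y (i + (k:ℤ)) = w.get k} := by
      ext y; simp
    rw [heq]
    refine isOpen_iInter_of_finite fun k => ?_
    show IsOpen ((fun y : ℤ → A => y (i + (k:ℤ))) ⁻¹' {w.get k})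
    exact (continuous_apply (A := fun _ : ℤ => A) (i + (k:ℤ))).isOpen_preimage ({w.get k} : Set A) (isOpen_discrete _)

theorem compactSpace_of_isClosed [Finite A] {X : Set (ℤ → A)} (hcl : IsClosed X) :
    CompactSpace ↥X := by
  haveI : CompactSpace A := Finite.compactSpace
  exact isCompact_iff_compactSpace.mp hcl.isCompact

theorem continuous_shiftOn {X : Set (ℤ → A)} (hS : ∀ x ∈ X, shift x ∈ X) :
    Continuous (shiftOn X hS) := by
  refine Continuous.subtype_mk ?_ _
  have h : Continuous (shift : (ℤ → A) → (ℤ → A)) :=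
    continuous_pi fun n => continuous_apply (n + 1)
  exact h.comp continuous_subtype_val

theorem shiftOn_iterate {X : Set (ℤ → A)} (hS : ∀ x ∈ X, shift x ∈ X) (k : ℕ) :
    ∀ (x : ↥X) (i : ℤ), ((shiftOn X hS)^[k] x).1 i = x.1 (i + k) := by
  induction k with
  | zero => intro x i; simp
  | succ k ih =>
      intro x i
      rw [Function.iterate_succ_apply, ih]
      show x.1 (i + k + 1) = x.1 (i + (k+1 : ℕ))
      congr 1
      push_cast
      ring

theorem exists_window {X : Set (ℤ → A)} [CompactSpace ↥X] (f : C(↥X, ℤ)) :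
    ∃ N : ℕ, ∀ x y : ↥X, (∀ i : ℤ, i.natAbs ≤ N → x.1 i = y.1 i) → f x = f y := by
  classical
  have key : ∀ x : ↥X, ∃ (I : Finset ℤ), ∀ y : ↥X, (∀ i ∈ I, y.1 i = x.1 i) → f y = f x := by
    intro x
    have hopen : IsOpen (f ⁻¹' {f x}) := (isOpen_discrete _).preimage f.continuous
    obtain ⟨V, hV, hVeq⟩ := isOpen_induced_iff.mp hopen
    have hxV : x.1 ∈ V := by
      have hme : x ∈ f ⁻¹' {f x} := rfl
      rw [← hVeq] at hme
      exact hme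
    obtain ⟨I, u, hu, hsub⟩ := isOpen_pi_iff.mp hV x.1 hxV
    refine ⟨I, fun y hy => ?_⟩
    have h1 : y.1 ∈ (↑I : Set ℤ).pi u := by
      intro i hi
      rw [hy i hi]
      exact (hu i hi).2
    have h2 : y ∈ f ⁻¹' {f x} := by
      rw [← hVeq]
      exact hsub h1
    exact h2
  choose I hI using key
  have hopen2 : ∀ x : ↥X, IsOpen {y : ↥X | ∀ i ∈ I x, y.1 i = x.1 i} := by
    intro x
    have heq : {y : ↥X | ∀ i ∈ I x, y.1 i = x.1 i}
        = ⋂ i ∈ I x, {y : ↥X | y.1 i = x.1 i} := by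
      ext y; simp
    rw [heq]
    refine isOpen_biInter_finset fun i _ => ?_
    show IsOpen ((fun y : ↥X => y.1 i) ⁻¹' {x.1 i})
    exact (((continuous_apply (A := fun _ : ℤ => A) i).comp continuous_subtype_val).isOpen_preimage
      ({x.1 i} : Set A) (isOpen_discrete _))
  obtain ⟨t, ht⟩ := IsCompact.elim_finite_subcover (isCompact_univ (X := ↥X))
    (fun x : ↥X => {y : ↥X | ∀ i ∈ I x, y.1 i = x.1 i}) hopen2
    (fun x _ => Set.mem_iUnion.mpr ⟨x, fun i _ => rfl⟩)
  refine ⟨t.sup (fun x => (I x).sup Int.natAbs), fun x y hagree => ?_⟩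
  obtain ⟨x0, hx0t, hxmem⟩ : ∃ x0 ∈ t, ∀ i ∈ I x0, x.1 i = x0.1 i := by
    have := ht (Set.mem_univ x)
    simp only [Set.mem_iUnion] at this
    obtain ⟨x0, hx0, hmem⟩ := this
    exact ⟨x0, hx0, hmem⟩
  have hyx0 : ∀ i ∈ I x0, y.1 i = x0.1 i := by
    intro i hi
    have hb : i.natAbs ≤ t.sup (fun x => (I x).sup Int.natAbs) :=
      le_trans (Finset.le_sup (f := Int.natAbs) hi)
        (Finset.le_sup (f := fun x => (I x).sup Int.natAbs) hx0t)
    rw [← hagree i hb]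
    exact hxmem i hi
  rw [hI x0 x hxmem, hI x0 y hyx0]

theorem exists_cyl_subset {X : Set (ℤ → A)} {O : Set ↥X} (hO : IsOpen O) {y : ↥X}
    (hy : y ∈ O) :
    ∃ R : ℕ, ∀ z : ↥X, (∀ i : ℤ, i.natAbs ≤ R → z.1 i = y.1 i) → z ∈ O := by
  obtain ⟨V, hV, hVeq⟩ := isOpen_induced_iff.mp hO
  have hyV : y.1 ∈ V := by
    rw [← hVeq] at hy
    exact hy
  obtain ⟨I, u, hu, hsub⟩ := isOpen_pi_iff.mp hV y.1 hyV
  refine ⟨I.sup Int.natAbs, fun z hz => ?_⟩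
  have h1 : z.1 ∈ (↑I : Set ℤ).pi u := by
    intro i hi
    rw [hz i (Finset.le_sup (f := Int.natAbs) hi)]
    exact (hu i hi).2
  rw [← hVeq]
  exact hsub h1

end Stmt6Aux

namespace Stmt6Aux

section GH

variable {Y : Type*} [TopologicalSpace Y] [CompactSpace Y] [T2Space Y]

theorem gh_coboundary (T : Y → Y) (hT : Continuous T) (x0 : Y)
    (hdense : ∀ (x : Y) (O : Set Y), IsOpen O → O.Nonempty → ∃ k : ℕ, T^[k] x ∈ O)
    (φ : Y → ℤ) (hφ : Continuous φ) (Cb : ℤ)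
    (hbound : ∀ (x : Y) (M : ℕ), |∑ i ∈ Finset.range M, φ (T^[i] x)| ≤ Cb) :
    ∃ g : Y → ℤ, Continuous g ∧ ∀ x, φ x = g (T x) - g x := by
  classical
  have hCb0 : 0 ≤ Cb := le_trans (abs_nonneg _) (hbound x0 0)
  set Tt : Y × ℤ → Y × ℤ := fun p => (T p.1, p.2 + φ p.1) with hTtdef
  have hTtc : Continuous Tt := by
    refine Continuous.prodMk (hT.comp continuous_fst) ?_
    exact continuous_snd.add (hφ.comp continuous_fst)
  have hiter : ∀ (M : ℕ) (x : Y) (t : ℤ),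
      Tt^[M] (x, t) = (T^[M] x, t + ∑ i ∈ Finset.range M, φ (T^[i] x)) := by
    intro M
    induction M with
    | zero => intro x t; simp
    | succ M ih =>
        intro x t
        rw [Function.iterate_succ_apply, Function.iterate_succ_apply]
        have h1 : Tt (x, t) = (T x, t + φ x) := rfl
        rw [h1, ih]
        have h2 : ∑ i ∈ Finset.range (M+1), φ (T^[i] x)
            = ∑ i ∈ Finset.range M, φ (T^[i] (T x)) + φ x := by
          rw [Finset.sum_range_succ']
          simp only [Function.iterate_succ_apply, Function.iterate_zero_apply]
        rw [h2]
        refine Prod.ext rfl ?_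
        show t + φ x + ∑ i ∈ Finset.range M, φ (T^[i] (T x))
            = t + (∑ i ∈ Finset.range M, φ (T^[i] (T x)) + φ x)
        ring
  set Z : Set (Y × ℤ) := closure (Set.range fun M : ℕ => Tt^[M] (x0, 0)) with hZdef
  have hrangesub : (Set.range fun M : ℕ => Tt^[M] (x0, 0))
      ⊆ Set.univ ×ˢ Set.Icc (-Cb) Cb := by
    rintro p ⟨M, rfl⟩
    show Tt^[M] (x0, 0) ∈ Set.univ ×ˢ Set.Icc (-Cb) Cb
    rw [hiter]
    refine ⟨Set.mem_univ _, ?_⟩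
    have hb := abs_le.mp (hbound x0 M)
    constructor
    · simp only [zero_add]; exact hb.1
    · simp only [zero_add]; exact hb.2
  have hZsub : Z ⊆ Set.univ ×ˢ Set.Icc (-Cb) Cb :=
    closure_minimal hrangesub (isClosed_univ.prod (isClosed_discrete _))
  have hZcomp : IsCompact Z := by
    refine IsCompact.of_isClosed_subset ?_ isClosed_closure hZsub
    exact isCompact_univ.prod (Set.finite_Icc _ _).isCompact
  have hZne : Z.Nonempty := ⟨(x0, 0), subset_closure ⟨0, rfl⟩⟩
  have hZinv : Set.MapsTo Tt Z Z := by
    intro p hp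
    have h1 : Tt '' (Set.range fun M : ℕ => Tt^[M] (x0,0))
        ⊆ (Set.range fun M : ℕ => Tt^[M] (x0,0)) := by
      rintro q ⟨r, ⟨M, rfl⟩, rfl⟩
      exact ⟨M+1, Function.iterate_succ_apply' Tt M _⟩
    have h2 : Tt p ∈ Tt '' closure (Set.range fun M : ℕ => Tt^[M] (x0,0)) := ⟨p, hp, rfl⟩
    have h3 := image_closure_subset_closure_image (f := Tt) hTtc h2
    exact closure_mono h1 h3
  -- Zorn's lemma: a minimal nonempty closed invariant subset
  set S : Set (Set (Y × ℤ)) := {K | K ⊆ Z ∧ K.Nonempty ∧ IsClosed K ∧ Set.MapsTo Tt K K}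
    with hSdef
  have hZorn : ∃ K ⊆ Z, Minimal (· ∈ S) K := by
    refine zorn_superset_nonempty S ?_ Z ⟨subset_rfl, hZne, isClosed_closure, hZinv⟩
    intro c hcS hchain hcne
    haveI : Nonempty c := Set.Nonempty.to_subtype hcne
    have hdir : Directed (fun A B : Set (Y × ℤ) => A ⊇ B) (fun K : c => (K : Set (Y × ℤ))) := by
      intro K1 K2
      rcases hchain.total K1.2 K2.2 with h | h
      · exact ⟨K1, subset_rfl, h⟩
      · exact ⟨K2, h, subset_rfl⟩
    have hne : (⋂ K : c, (K : Set (Y × ℤ))).Nonempty := by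
      refine IsCompact.nonempty_iInter_of_directed_nonempty_isCompact_isClosed _ hdir
        (fun K => (hcS K.2).2.1)
        (fun K => IsCompact.of_isClosed_subset hZcomp (hcS K.2).2.2.1 (hcS K.2).1)
        (fun K => (hcS K.2).2.2.1)
    have hint : ⋂₀ c = ⋂ K : c, (K : Set (Y × ℤ)) := Set.sInter_eq_iInter
    refine ⟨⋂₀ c, ⟨?_, ?_, ?_, ?_⟩, fun s hs => Set.sInter_subset_of_mem hs⟩
    · obtain ⟨s, hs⟩ := hcne
      exact (Set.sInter_subset_of_mem hs).trans (hcS hs).1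
    · rw [hint]; exact hne
    · exact isClosed_sInter (fun K hK => (hcS hK).2.2.1)
    · intro p hp
      rw [Set.mem_sInter] at hp ⊢
      intro K hK
      exact (hcS hK).2.2.2 (hp K hK)
  obtain ⟨K, hKZ, hKmin⟩ := hZorn
  have hKS : K ∈ S := hKmin.prop
  obtain ⟨hKsubZ, hKne, hKcl, hKinv⟩ := hKS
  have hKcomp : IsCompact K := IsCompact.of_isClosed_subset hZcomp hKcl hKsubZ
  have hfst_iter : ∀ (k : ℕ) (p : Y × ℤ), (Tt^[k] p).1 = T^[k] p.1 := by
    intro k p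
    have := hiter k p.1 p.2
    rw [show (p.1, p.2) = p from rfl] at this
    rw [this]
  have hforward : ∀ (p : Y × ℤ), p ∈ K → ∀ k : ℕ, (T^[k] p.1) ∈ Prod.fst '' K := by
    intro p hp k
    have h1 : Tt^[k] p ∈ K := Set.MapsTo.iterate hKinv k hp
    exact ⟨Tt^[k] p, h1, hfst_iter k p⟩
  have hπ : ∀ y : Y, ∃ t, (y, t) ∈ K := by
    intro y
    by_contra hc
    push_neg at hc
    have hP1closed : IsClosed (Prod.fst '' K) := (hKcomp.image continuous_fst).isClosed
    have hyP1 : y ∉ Prod.fst '' K := by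
      rintro ⟨p, hp, rfl⟩
      exact hc p.2 (by rwa [show (p.1, p.2) = p from rfl])
    obtain ⟨p0, hp0⟩ := hKne
    obtain ⟨k, hk⟩ := hdense p0.1 (Prod.fst '' K)ᶜ hP1closed.isOpen_compl ⟨y, hyP1⟩
    exact hk (hforward p0 hp0 k)
  have hsecond : ∀ p ∈ K, p.2 ∈ Set.Icc (-Cb) Cb := fun p hp => (hZsub (hKsubZ hp)).2
  have huniq : ∀ y t t', (y, t) ∈ K → (y, t') ∈ K → t = t' := by
    intro y t t' ht ht'
    by_contra hne
    set δ : ℤ := t' - t with hδ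
    have hδ0 : δ ≠ 0 := fun h => hne (by omega)
    set tr : Y × ℤ → Y × ℤ := fun p => (p.1, p.2 + δ) with htr
    have htrc : Continuous tr := continuous_fst.prodMk (continuous_snd.add continuous_const)
    have hcomm : ∀ p, Tt (tr p) = tr (Tt p) := by
      intro p
      show (T p.1, p.2 + δ + φ p.1) = (T p.1, p.2 + φ p.1 + δ)
      rw [add_right_comm]
    have hKK' : K ∩ (tr '' K) ∈ S := by
      refine ⟨Set.inter_subset_left.trans hKsubZ,
        ⟨(y, t'), ht', ⟨(y, t), ht, by simp [htr, hδ]⟩⟩,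
        hKcl.inter (hKcomp.image htrc).isClosed, ?_⟩
      rintro p ⟨hpK, q, hqK, rfl⟩
      exact ⟨hKinv hpK, ⟨Tt q, hKinv hqK, (hcomm q).symm⟩⟩
    have hsub : K ⊆ tr '' K :=
      (hKmin.le_of_le hKK' Set.inter_subset_left).trans Set.inter_subset_right
    have hiter2 : ∀ (j : ℕ), (y, t - (j : ℤ) * δ) ∈ K := by
      intro j
      induction j with
      | zero => simpa using ht
      | succ j ih =>
          obtain ⟨q, hq, hqe⟩ := hsub ih
          have hq1 : q.1 = y := by
            have := congrArg Prod.fst hqe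
            simpa [htr] using this
          have hq2 : q.2 = t - ((j : ℤ) + 1) * δ := by
            have h5 := congrArg Prod.snd hqe
            simp only [htr] at h5
            have hexp : ((j : ℤ) + 1) * δ = (j : ℤ) * δ + δ := by ring
            omega
          have hcast : ((j+1 : ℕ) : ℤ) = (j : ℤ) + 1 := by push_cast; ring
          rw [hcast]
          have heta : (y, t - ((j : ℤ) + 1) * δ) = q := by
            rw [← hq1, ← hq2]
          rw [heta]
          exact hq
    -- contradiction with boundedness
    set j : ℕ := (2 * Cb + |t| + 1).toNat with hj
    have hjval : (j : ℤ) = 2 * Cb + |t| + 1 := by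
      rw [hj]
      exact Int.toNat_of_nonneg (by positivity)
    have h1 := hsecond _ (hiter2 j)
    simp only [Set.mem_Icc] at h1
    have habs : |t - (j : ℤ) * δ| ≤ Cb := abs_le.mpr h1
    have hδ1 : 1 ≤ |δ| := Int.one_le_abs hδ0
    have h2 : (j : ℤ) ≤ (j : ℤ) * |δ| := le_mul_of_one_le_right (by positivity) hδ1
    have h3 : |(j : ℤ) * δ| = (j : ℤ) * |δ| := by
      rw [abs_mul, abs_of_nonneg (by positivity : (0:ℤ) ≤ (j:ℤ))]
    have h4 : |(j : ℤ) * δ| - |t| ≤ |t - (j : ℤ) * δ| := by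
      have := abs_sub_abs_le_abs_sub ((j : ℤ) * δ) t
      have he : |(j : ℤ) * δ - t| = |t - (j : ℤ) * δ| := abs_sub_comm _ _
      omega
    omega
  -- the graph function
  choose g hg using hπ
  have hco : ∀ y, g (T y) = g y + φ y := by
    intro y
    have h1 : Tt (y, g y) ∈ K := hKinv (hg y)
    have h2 : Tt (y, g y) = (T y, g y + φ y) := rfl
    rw [h2] at h1
    exact huniq (T y) (g (T y)) (g y + φ y) (hg (T y)) h1
  have hfibcl : ∀ t : ℤ, IsClosed {y : Y | g y = t} := by
    intro t
    have heq : {y : Y | g y = t} = (fun y => (y, t)) ⁻¹' K := by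
      ext y
      constructor
      · rintro rfl
        exact hg y
      · intro h
        exact huniq y (g y) t (hg y) h
    rw [heq]
    exact hKcl.preimage (continuous_id.prodMk continuous_const)
  have hgb : ∀ y, g y ∈ Set.Icc (-Cb) Cb := fun y => hsecond _ (hg y)
  have hfibop : ∀ t : ℤ, IsOpen {y : Y | g y = t} := by
    intro t
    have heq : {y : Y | g y = t} = (⋃ s ∈ (Finset.Icc (-Cb) Cb).erase t, {y : Y | g y = s})ᶜ := by
      ext y
      simp only [Set.mem_setOf_eq, Set.mem_compl_iff, Set.mem_iUnion, exists_prop]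
      constructor
      · rintro rfl ⟨s, hs, hys⟩
        exact (Finset.mem_erase.mp hs).1 (by omega)
      · intro h
        by_contra hne
        refine h ⟨g y, ?_, rfl⟩
        refine Finset.mem_erase.mpr ⟨fun hc => hne (by omega), ?_⟩
        have := hgb y
        simp only [Set.mem_Icc] at this
        exact Finset.mem_Icc.mpr this
    rw [heq]
    have hcl : IsClosed (⋃ s ∈ (Finset.Icc (-Cb) Cb).erase t, {y : Y | g y = s}) :=
      Set.Finite.isClosed_biUnion (Finset.finite_toSet _) fun s _ => hfibcl s
    exact hcl.isOpen_compl
  have hgc : Continuous g := by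
    have hlc : IsLocallyConstant g := by
      intro s
      have heq : g ⁻¹' s = ⋃ t ∈ s, {y : Y | g y = t} := by
        ext y
        simp only [Set.mem_preimage, Set.mem_iUnion, Set.mem_setOf_eq, exists_prop]
        constructor
        · intro h
          exact ⟨g y, h, rfl⟩
        · rintro ⟨t, ht, hyt⟩
          rw [← hyt] at ht
          exact ht
      rw [heq]
      exact isOpen_biUnion fun t _ => hfibop t
    exact hlc.continuous
  exact ⟨g, hgc, fun x => by have := hco x; omega⟩

end GH

end Stmt6Aux

open Stmt6Aux in
theorem stmt6 {A : Type*} [Fintype A] [DecidableEq A] [TopologicalSpace A] [DiscreteTopology A]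
    (hcard : 2 ≤ Fintype.card A)
    (τ : ℕ → A → List A) (hner : ∀ n, NonErasing (τ n)) (hgrow : GrowsUnbounded τ)
    (hprim : IsPrimitive τ) (huni : ∀ n, IsUnimodular (τ n)) (hprop : ∀ n, IsProper (τ n))
    (X : Set (ℤ → A)) (hX : X = SadicShift τ)
    (hS : ∀ x ∈ X, shift x ∈ X)
    (f : C(↥X, ℤ)) :
    ∃ (α : A → ℤ) (g : C(↥X, ℤ)),
      ∀ x : ↥X,
        f x = (g (shiftOn X hS x) - g x) +
          ∑ a : A, α a * (if x.1 0 = a then 1 else 0) := by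

  classical
  haveI : Nonempty A := Fintype.card_pos_iff.mp (by omega)
  by_cases hne : Nonempty ↥X
  case neg =>
    exact ⟨0, f, fun x => (hne ⟨x⟩).elim⟩
  obtain ⟨x0⟩ := id hne
  have hclosed : IsClosed X := by rw [hX]; exact isClosed_sadicShift τ
  haveI : CompactSpace ↥X := compactSpace_of_isClosed hclosed
  set T : ↥X → ↥X := shiftOn X hS with hTdef
  have hTc : Continuous T := continuous_shiftOn hS
  have hTitc : ∀ k : ℕ, Continuous (T^[k]) := by
    intro k
    induction k with
    | zero => simpa using continuous_id
    | succ k ih => rw [Function.iterate_succ]; exact ih.comp hTc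
  obtain ⟨N, hN⟩ := exists_window f
  set L : ℕ := 2 * N with hLdef
  set f' : ↥X → ℤ := fun x => f (T^[N] x) with hf'def
  have hf'c : Continuous f' := f.continuous.comp (hTitc N)
  have hwin : ∀ x y : ↥X, (∀ j : Fin (L+1), x.1 ((j : ℕ) : ℤ) = y.1 ((j : ℕ) : ℤ)) →
      f' x = f' y := by
    intro x y h
    refine hN _ _ fun i hi => ?_
    rw [shiftOn_iterate hS N x i, shiftOn_iterate hS N y i]
    have h0 : 0 ≤ i + N := by omega
    have h1 : i + N ≤ L := by omega
    have h2 : i + (N : ℤ) = (((i + N).toNat : ℕ) : ℤ) := by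
      rw [Int.toNat_of_nonneg h0]
    have hlt : (i + N).toNat < L + 1 := by omega
    rw [h2]
    exact h ⟨(i + N).toNat, hlt⟩
  set F : (Fin (L+1) → A) → ℤ := fun u =>
    if h : ∃ z : ↥X, ∀ j : Fin (L+1), z.1 ((j : ℕ) : ℤ) = u j then f' h.choose else 0
    with hFdef
  have hF : ∀ x : ↥X, F (fun j => x.1 ((j : ℕ) : ℤ)) = f' x := by
    intro x
    have hex : ∃ z : ↥X, ∀ j : Fin (L+1),
        z.1 ((j : ℕ) : ℤ) = (fun j : Fin (L+1) => x.1 ((j : ℕ) : ℤ)) j := ⟨x, fun j => rfl⟩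
    rw [hFdef]
    simp only [dif_pos hex]
    exact hwin hex.choose x hex.choose_spec
  obtain ⟨α, Cb, hαbound⟩ := exists_alpha_word_bound τ hner hgrow hprim huni
      (fun k => (hprop k).1) L F
  set φ : ↥X → ℤ := fun x => f' x - α (x.1 0) with hφdef
  have hφc : Continuous φ := by
    refine hf'c.sub ?_
    have h1 : Continuous (fun x : ↥X => x.1 0) :=
      (continuous_apply (A := fun _ : ℤ => A) 0).comp continuous_subtype_val
    exact (continuous_of_discreteTopology (f := α)).comp h1
  -- Birkhoff bound
  have hbound : ∀ (x : ↥X) (M : ℕ), |∑ i ∈ Finset.range M, φ (T^[i] x)| ≤ Cb := by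
    intro x M
    obtain ⟨w, hwdef⟩ : ∃ w, w = List.ofFn (fun k : Fin (M + L + 1) => x.1 ((k : ℕ) : ℤ)) :=
      ⟨_, rfl⟩
    have hwlen : w.length = M + L + 1 := by rw [hwdef]; simp
    have hwget : ∀ (i : ℕ) (h : i < w.length), w.get ⟨i, h⟩ = x.1 ((i : ℕ) : ℤ) := by
      intro i h
      rw [List.get_eq_getElem, List.getElem_of_eq hwdef, List.getElem_ofFn]
    have hxmem : x.1 ∈ SadicShift τ := by rw [← hX]; exact x.2
    have hwlang : w ∈ SadicLang τ := by
      refine hxmem w ⟨0, fun k => ?_⟩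
      rw [show w.get k = x.1 (((k : ℕ) : ℕ) : ℤ) from hwget k.1 k.2, zero_add]
    set D : ℕ → A := fun _ => Classical.arbitrary A with hDdef
    have hsum : ∑ i ∈ Finset.range M, φ (T^[i] x) = isum F α (ext w D) 0 M := by
      unfold isum
      refine Finset.sum_congr rfl fun i hi => ?_
      have hiM := Finset.mem_range.mp hi
      have hA : (fun j : Fin (L+1) => (T^[i] x).1 ((j : ℕ) : ℤ))
          = fun j : Fin (L+1) => ext w D (0 + i + (j : ℕ)) := by
        funext j
        have hidx : 0 + i + (j : ℕ) < w.length := by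
          have := j.2
          omega
        rw [ext_get _ _ _ hidx, hwget _ hidx]
        rw [shiftOn_iterate hS i x ((j : ℕ) : ℤ)]
        rw [show ((j : ℕ) : ℤ) + (i : ℤ) = (((0 + i + (j : ℕ) : ℕ)) : ℤ) by push_cast; ring]
      have hB : (T^[i] x).1 0 = ext w D (0 + i) := by
        have hidx : 0 + i < w.length := by omega
        rw [ext_get _ _ _ hidx, hwget _ hidx]
        rw [shiftOn_iterate hS i x 0]
        rw [show ((0 : ℤ) + (i : ℤ)) = (((0 + i : ℕ)) : ℤ) by push_cast; ring]
      show f' (T^[i] x) - α ((T^[i] x).1 0) = _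
      rw [← hF (T^[i] x), hA, hB]
    rw [hsum]
    exact hαbound w hwlang M (by omega) D
  -- density of forward orbits
  have hdense : ∀ (x : ↥X) (O : Set ↥X), IsOpen O → O.Nonempty → ∃ k : ℕ, T^[k] x ∈ O := by
    rintro x O hO ⟨y, hy⟩
    obtain ⟨R, hR⟩ := exists_cyl_subset hO hy
    obtain ⟨w, hwdef⟩ : ∃ w, w = List.ofFn (fun t : Fin (2*R+1) => y.1 ((t : ℕ) - (R : ℤ))) :=
      ⟨_, rfl⟩
    have hwlen : w.length = 2*R+1 := by rw [hwdef]; simp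
    have hwget : ∀ (i : ℕ) (h : i < w.length), w.get ⟨i, h⟩ = y.1 ((i : ℕ) - (R : ℤ)) := by
      intro i h
      rw [List.get_eq_getElem, List.getElem_of_eq hwdef, List.getElem_ofFn]
    have hymem : y.1 ∈ SadicShift τ := by rw [← hX]; exact y.2
    have hwlang : w ∈ SadicLang τ := by
      refine hymem w ⟨-(R : ℤ), fun k => ?_⟩
      rw [show w.get k = y.1 (((k : ℕ) : ℕ) - (R : ℤ)) from hwget k.1 k.2]
      congr 1
      ring
    have hxmem : x.1 ∈ SadicShift τ := by rw [← hX]; exact x.2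
    obtain ⟨i, hi0, hocc⟩ := occurs_everywhere τ hprim hxmem hwlang 0
    set k : ℕ := i.toNat + R with hk
    refine ⟨k, hR _ fun s hs => ?_⟩
    rw [shiftOn_iterate hS k _ s]
    have hsR0 : 0 ≤ s + R := by omega
    have hsRlt : (s + R).toNat < w.length := by rw [hwlen]; omega
    have hoc := hocc ⟨(s + R).toNat, hsRlt⟩
    rw [show w.get ⟨(s + R).toNat, hsRlt⟩ = y.1 (((s + R).toNat : ℕ) - (R : ℤ)) from
      hwget _ hsRlt] at hoc
    have e1 : s + (k : ℤ) = i + (((s + R).toNat : ℕ) : ℤ) := by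
      rw [hk]
      push_cast [Int.toNat_of_nonneg hi0, Int.toNat_of_nonneg hsR0]
      ring
    rw [e1, hoc]
    congr 1
    rw [Int.toNat_of_nonneg hsR0]
    ring
  -- Gottschalk--Hedlund
  obtain ⟨g1, hg1c, hg1⟩ := gh_coboundary T hTc x0 hdense φ hφc Cb hbound
  -- telescoping
  set g0 : ↥X → ℤ := fun x => ∑ i ∈ Finset.range N, f (T^[i] x) with hg0def
  have hg0c : Continuous g0 := by
    refine continuous_finset_sum _ fun i _ => f.continuous.comp (hTitc i)
  have htel : ∀ x, f (T^[N] x) - f x = g0 (T x) - g0 x := by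
    intro x
    have h1 : g0 (T x) = ∑ i ∈ Finset.range N, f (T^[i+1] x) := by
      refine Finset.sum_congr rfl fun i _ => ?_
      rw [Function.iterate_succ_apply]
    have h2 : ∑ i ∈ Finset.range N, (f (T^[i+1] x) - f (T^[i] x))
        = f (T^[N] x) - f (T^[0] x) := Finset.sum_range_sub (fun i => f (T^[i] x)) N
    rw [Finset.sum_sub_distrib] at h2
    have h3 : T^[0] x = x := rfl
    rw [h3] at h2
    rw [h1]
    show f (T^[N] x) - f x
        = (∑ i ∈ Finset.range N, f (T^[i+1] x)) - ∑ i ∈ Finset.range N, f (T^[i] x)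
    omega
  -- final assembly
  refine ⟨α, ⟨fun x => g1 x - g0 x, hg1c.sub hg0c⟩, fun x => ?_⟩
  have hφx' : f (T^[N] x) - α (x.1 0) = g1 (T x) - g1 x := hg1 x
  have htx := htel x
  have hsum2 : ∑ a : A, α a * (if x.1 0 = a then 1 else 0) = α (x.1 0) := by
    have h1 : ∀ a : A, α a * (if x.1 0 = a then 1 else 0) = if x.1 0 = a then α a else 0 := by
      intro a
      split <;> simp
    rw [Finset.sum_congr rfl fun a _ => h1 a, Finset.sum_ite_eq]
    simp
  simp only [ContinuousMap.coe_mk]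
  rw [hsum2]
  show f x = (g1 (T x) - g0 (T x) - (g1 x - g0 x)) + α (x.1 0)
  omega
end
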